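/- arXiv:2209.14524 — 9 statements merged into one kernel-verified Lean document; each statement's English description precedes it below -/
import Mathlib

section
/- Let s and t be positive integers and let M be a matroid with the (s,2s,t,2t)-property. If M has an s-echidna (S_1,…,S_n) with n ≥ s+2t−1, then (S_1,…,S_n) is also a t-coechidna of M. -/
/-!
Given `t` spines, pick one element from each and enclose these in a cocircuit `K` with
`|K| = 2t`. At most `2t` spines meet `K`, so since `n ≥ s + 2t - 1` there are `s - 1` spines
avoiding `K`. Together with a spine `S i` meeting `K` they form a circuit whose intersection
with `K` is `S i ∩ K`; by orthogonality this is not a single element, so `S i ⊆ K`. Hence the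
`t` chosen spines lie in `K`, and comparing sizes they are all of `K`.
-/

open Set Function

namespace Matroid

variable {α : Type*}

/-- A circuit of a matroid: a minimal dependent set. -/
def IsCircuit' (M : Matroid α) (C : Set α) : Prop := Minimal M.Dep C

/-- A cocircuit of a matroid: a circuit of the dual matroid. -/
def IsCocircuit' (M : Matroid α) (C : Set α) : Prop := M✶.IsCircuit' C

/-- The `ℕ`-valued rank of a set `X` in a matroid `M`:
the size of a largest independent subset of `X`. -/
noncomputable def rk' (M : Matroid α) (X : Set α) : ℕ :=
  sSup {n : ℕ | ∃ I, M.Indep I ∧ I ⊆ X ∧ I.ncard = n}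

/-- The connectivity function `λ(X) = r(X) + r(E − X) − r(M)`. -/
noncomputable def lam' (M : Matroid α) (X : Set α) : ℕ :=
  M.rk' X + M.rk' (M.E \ X) - M.rk' M.E

/-- The `(s,u,t,v)`-property: every `s`-element subset of the ground set is contained in a
circuit of size `u`, and every `t`-element subset is contained in a cocircuit of size `v`. -/
def HasProp (M : Matroid α) (s u t v : ℕ) : Prop :=
  (∀ S ⊆ M.E, S.ncard = s → ∃ C, M.IsCircuit' C ∧ C.ncard = u ∧ S ⊆ C) ∧
  (∀ T ⊆ M.E, T.ncard = t → ∃ C, M.IsCocircuit' C ∧ C.ncard = v ∧ T ⊆ C)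

/-- A `t`-echidna of order `n`: a family of `n` pairwise disjoint `2`-element subsets of the
ground set (spines) such that the union of any `t` spines is a circuit.
(A `t`-coechidna of `M` is a `t`-echidna of `M✶`.) -/
def IsEchidna (M : Matroid α) (t : ℕ) {n : ℕ} (S : Fin n → Set α) : Prop :=
  (∀ i, S i ⊆ M.E) ∧ (∀ i, (S i).ncard = 2) ∧
  Pairwise (Function.onFun Disjoint S) ∧
  ∀ I : Finset (Fin n), I.card = t → M.IsCircuit' (⋃ i ∈ I, S i)

/-- `M` is an `(s,t)`-spike with associated partition `(A 1, …, A m)`: the `A i` are `m`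
pairwise disjoint pairs partitioning the ground set, with `m ≥ max s t`, such that the union of
any `s` pairs is a circuit and the union of any `t` pairs is a cocircuit. -/
def IsSpike (M : Matroid α) (s t : ℕ) {m : ℕ} (A : Fin m → Set α) : Prop :=
  max s t ≤ m ∧ (⋃ i, A i) = M.E ∧
  Pairwise (Function.onFun Disjoint A) ∧ (∀ i, (A i).ncard = 2) ∧
  (∀ I : Finset (Fin m), I.card = s → M.IsCircuit' (⋃ i ∈ I, A i)) ∧
  (∀ I : Finset (Fin m), I.card = t → M.IsCocircuit' (⋃ i ∈ I, A i))

end Matroid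

lemma injOn_of_forall_mem_of_pairwise_disjoint {ι α : Type*} {S : ι → Set α}
    (hS : Pairwise (Disjoint on S)) {f : ι → α} {A : Set ι} (hf : ∀ i ∈ A, f i ∈ S i) :
    A.InjOn f := fun i hi j hj hij ↦
  by_contra fun hne ↦ (hS hne).ne_of_mem (hf i hi) (hf j hj) hij

lemma Finset.card_le_ncard_of_forall_inter_nonempty {ι α : Type*} {S : ι → Set α}
    (hS : Pairwise (Disjoint on S)) {K : Set α} (hK : K.Finite) {B : Finset ι}
    (hB : ∀ i ∈ B, (S i ∩ K).Nonempty) : B.card ≤ K.ncard := by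
  obtain rfl | ⟨i, hi⟩ := B.eq_empty_or_nonempty
  · simp
  have : Nonempty α := ⟨(hB i hi).some⟩
  choose! g hg using hB
  rw [← ncard_coe_finset]
  exact ncard_le_ncard_of_injOn g (fun i hi ↦ (hg i hi).2)
    (injOn_of_forall_mem_of_pairwise_disjoint hS fun i hi ↦ (hg i hi).1) hK

namespace Matroid.IsEchidna

variable {α : Type*} {M : Matroid α} {s n : ℕ} {S : Fin n → Set α}

lemma finite (hS : M.IsEchidna s S) (i : Fin n) : (S i).Finite :=
  finite_of_ncard_pos (by rw [hS.2.1 i]; omega)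

lemma ncard_biUnion (hS : M.IsEchidna s S) (I : Finset (Fin n)) :
    (⋃ i ∈ I, S i).ncard = 2 * I.card := by
  rw [← Finset.set_biUnion_coe,
    I.finite_toSet.ncard_biUnion (fun i _ ↦ hS.finite i) fun i _ j _ hij ↦ hS.2.2.1 hij,
    finsum_mem_coe_finset, Finset.sum_congr rfl fun i _ ↦ hS.2.1 i, Finset.sum_const,
    smul_eq_mul, mul_comm]

lemma subset_of_inter_nonempty (hs : 0 < s) (hS : M.IsEchidna s S) {K : Set α}
    (hK : M.IsCocircuit' K) (hKfin : K.Finite) (hKn : K.ncard + s ≤ n + 1) {i : Fin n}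
    (hi : (S i ∩ K).Nonempty) : S i ⊆ K := by
  classical
  set B := Finset.univ.filter fun j ↦ (S j ∩ K).Nonempty
  have hB : B.card ≤ K.ncard :=
    Finset.card_le_ncard_of_forall_inter_nonempty hS.2.2.1 hKfin fun j hj ↦
      (Finset.mem_filter.1 hj).2
  obtain ⟨J, hJB, hJ⟩ := Finset.exists_subset_card_eq (s := Bᶜ) (n := s - 1)
    (by rw [Finset.card_compl, Fintype.card_fin]; omega)
  have hJK : ∀ j ∈ J, S j ∩ K = ∅ := fun j hj ↦ by
    simpa [B, not_nonempty_iff_eq_empty] using Finset.mem_compl.1 (hJB hj)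
  have hiJ : i ∉ J := fun hiJ ↦ hi.ne_empty (hJK i hiJ)
  have hC : M.IsCircuit' (⋃ j ∈ insert i J, S j) :=
    hS.2.2.2 _ (by rw [Finset.card_insert_of_notMem hiJ]; omega)
  have hCK : (⋃ j ∈ insert i J, S j) ∩ K = S i ∩ K := by
    rw [Finset.set_biUnion_insert, union_inter_distrib_right, iUnion₂_inter,
      iUnion₂_congr hJK]
    simp
  have hnt : (S i ∩ K).Nontrivial :=
    hCK ▸ IsCircuit.isCocircuit_inter_nontrivial hC hK (hCK ▸ hi)
  have hSi : S i ∩ K = S i :=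
    eq_of_subset_of_ncard_le inter_subset_left (by
      rw [hS.2.1 i]
      exact one_lt_ncard_iff_nontrivial_and_finite.2
        ⟨hnt, (hS.finite i).subset inter_subset_left⟩) (hS.finite i)
  exact inter_eq_left.1 hSi

end Matroid.IsEchidna

universe u

open Matroid

theorem statement1_general {α : Type u} (s t n : ℕ) (hs : 0 < s)
    (M : Matroid α) (hE : M.E.Finite) (hM : M.HasProp s (2 * s) t (2 * t))
    (S : Fin n → Set α) (hS : M.IsEchidna s S) (hn : s + 2 * t - 1 ≤ n) :
    M✶.IsEchidna t S := by
  refine ⟨hS.1, hS.2.1, hS.2.2.1, fun I hI ↦ ?_⟩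
  choose x hx using fun i ↦ nonempty_of_ncard_ne_zero (s := S i) (by rw [hS.2.1 i]; omega)
  obtain ⟨K, hK, hKcard, hxK⟩ := hM.2 (x '' I)
    (image_subset_iff.2 fun i _ ↦ hS.1 i (hx i))
    (by rw [(injOn_of_forall_mem_of_pairwise_disjoint hS.2.2.1 fun i _ ↦ hx i).ncard_image,
      ncard_coe_finset, hI])
  have hKfin : K.Finite := hE.subset hK.1.subset_ground
  have hsub : (⋃ i ∈ I, S i) ⊆ K := iUnion₂_subset fun i hi ↦
    hS.subset_of_inter_nonempty hs hK hKfin (by omega)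
      ⟨x i, hx i, hxK (mem_image_of_mem x hi)⟩
  rwa [← eq_of_subset_of_ncard_le hsub (by rw [hKcard, hS.ncard_biUnion, hI]) hKfin] at hK

/-- If `M` has the `(s,2s,t,2t)`-property and an `s`-echidna `(S 1, …, S n)` with
`n ≥ s + 2t − 1`, then `(S 1, …, S n)` is also a `t`-coechidna of `M`. -/
theorem statement1 {α : Type u} (s t n : ℕ) (hs : 0 < s) (ht : 0 < t)
    (M : Matroid α) (hE : M.E.Finite) (hM : M.HasProp s (2 * s) t (2 * t))
    (S : Fin n → Set α) (hS : M.IsEchidna s S) (hn : s + 2 * t - 1 ≤ n) :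
    M✶.IsEchidna t S :=
  statement1_general s t n hs M hE hM S hS hn
end

section
/- Let s and t be positive integers, let M be a matroid with the (s,2s,t,2t)-property, and let (S_1,…,S_n) be an s-echidna of M with n ≥ max{s+2t,2s+t}−1. If I is an (s−1)-element subset of {1,…,n} and z ∈ E(M) − ⋃_{i∈I} S_i, then there is a 2s-element circuit of M containing {z} ∪ ⋃_{i∈I} S_i. -/
open Set Function

universe u

open Matroid

/-!
Pick a point `x i` on each spine. The circuit half of the property gives a `2s`-element circuit `C`
through `z` and the `x i`, `i ∈ I`; it remains to see that `C` contains every spine `S i`, `i ∈ I`.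
Both steps use that a circuit and a cocircuit never meet in exactly one element. First, a
`2t`-element cocircuit `K` meeting a spine contains it: otherwise that spine and `s - 1` spines
avoiding `K` form a circuit meeting `K` in one point. Second, if `S i ⊄ C`, a `2t`-element
cocircuit through the point of `S i \ C` and through points of `t - 1` spines avoiding `C` is
therefore the union of these `t` spines, and it meets `C` in one point. The bound on `n` supplies
the avoiding spines: `K` meets at most `2t - 1` spines besides `S i`, and `C` meets at most `s + 1`
spines outside `I`.
-/

section DisjointFamily

variable {α ι : Type*} {S : ι → Set α}

lemma ncard_biUnion_eq_two_mul (hdisj : Pairwise (Disjoint on S)) (h2 : ∀ i, (S i).ncard = 2)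
    (A : Finset ι) : (⋃ i ∈ A, S i).ncard = 2 * A.card := by
  rw [← A.set_biUnion_coe,
    A.finite_toSet.ncard_biUnion (fun i _ ↦ finite_of_ncard_ne_zero (by simp [h2]))
      (fun i _ j _ hij ↦ hdisj hij), finsum_mem_coe_finset]
  simp [h2, mul_comm]

lemma exists_injective_forall_mem (hdisj : Pairwise (Disjoint on S))
    (hne : ∀ i, (S i).Nonempty) : ∃ x : ι → α, Injective x ∧ ∀ i, x i ∈ S i := by
  choose x hx using hne
  refine ⟨x, fun i j hij ↦ ?_, hx⟩
  by_contra hne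
  exact (hdisj hne).ne_of_mem (hx i) (hij ▸ hx j) rfl

lemma biUnion_insert_inter_eq_inter {X : Set α} {i : ι} {F : Finset ι} [DecidableEq ι]
    (hF : ∀ j ∈ F, Disjoint (S j) X) : (⋃ j ∈ insert i F, S j) ∩ X = S i ∩ X := by
  rw [Finset.set_biUnion_insert, union_inter_distrib_right, iUnion₂_inter,
    iUnion₂_congr fun j hj ↦ (hF j hj).inter_eq]
  simp only [iUnion_empty, union_empty]

lemma ncard_setOf_not_disjoint_le (hdisj : Pairwise (Disjoint on S)) {X : Set α}
    (hX : X.Finite) : {j | ¬ Disjoint (S j) X}.ncard ≤ X.ncard := by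
  obtain rfl | ⟨a, -⟩ := X.eq_empty_or_nonempty
  · simp
  have : Nonempty α := ⟨a⟩
  have hmeet : ∀ j, ¬ Disjoint (S j) X → (S j ∩ X).Nonempty :=
    fun j ↦ not_disjoint_iff_nonempty_inter.mp
  choose! f hf using hmeet
  refine ncard_le_ncard_of_injOn f (fun j hj ↦ (hf j hj).2) (fun j₁ hj₁ j₂ hj₂ h ↦ ?_) hX
  by_contra hne
  exact (hdisj hne).ne_of_mem (hf j₁ hj₁).1 (h ▸ (hf j₂ hj₂).1) rfl

variable [Fintype ι]

lemma exists_finset_card_eq_forall_disjoint (hdisj : Pairwise (Disjoint on S)) {X : Set α}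
    (hX : X.Finite) (J : Finset ι) {k : ℕ}
    (hk : J.card + (X \ ⋃ i ∈ J, S i).ncard + k ≤ Fintype.card ι) :
    ∃ F : Finset ι, F.card = k ∧ Disjoint J F ∧ ∀ j ∈ F, Disjoint (S j) X := by
  classical
  set G := Finset.univ.filter fun j ↦ ¬ Disjoint (S j) (X \ ⋃ i ∈ J, S i)
  have hG : G.card ≤ (X \ ⋃ i ∈ J, S i).ncard := by
    simpa [G, ← ncard_coe_finset] using ncard_setOf_not_disjoint_le hdisj hX.sdiff
  obtain ⟨F, hFsub, hFcard⟩ := Finset.exists_subset_card_eq (s := (J ∪ G)ᶜ) (n := k) (by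
    rw [Finset.card_compl]
    have := Finset.card_union_le J G
    omega)
  have hFJG : ∀ j ∈ F, j ∉ J ∧ j ∉ G := fun j hj ↦ by
    simpa [not_or] using Finset.mem_compl.mp (hFsub hj)
  refine ⟨F, hFcard, Finset.disjoint_right.mpr fun j hj ↦ (hFJG j hj).1, fun j hj ↦ ?_⟩
  have hout : Disjoint (S j) (X \ ⋃ i ∈ J, S i) := by simpa [G] using (hFJG j hj).2
  have hin : Disjoint (S j) (⋃ i ∈ J, S i) := disjoint_iUnion₂_right.mpr fun i hi ↦
    hdisj fun h ↦ (hFJG j hj).1 (h ▸ hi)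
  exact (hout.union_right hin).mono_right (by rw [sdiff_union_self]; exact subset_union_left)

end DisjointFamily

lemma inter_eq_singleton_of_ncard_eq_two {α : Type*} {P X : Set α} (hP : P.ncard = 2) {u : α}
    (hu : u ∈ P ∩ X) (hPX : ¬ P ⊆ X) : P ∩ X = {u} := by
  obtain ⟨a, b, hab, rfl⟩ := ncard_eq_two.mp hP
  ext w
  simp only [insert_subset_iff, singleton_subset_iff, mem_inter_iff, mem_insert_iff,
    mem_singleton_iff] at hu hPX ⊢
  grind

namespace Matroid

variable {α : Type*} {M : Matroid α} {s n : ℕ} {S : Fin n → Set α} {C K : Set α}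

lemma IsCircuit'.isCircuit (h : M.IsCircuit' C) : M.IsCircuit C := h

lemma IsCocircuit'.isCocircuit (h : M.IsCocircuit' K) : M.IsCocircuit K := h

lemma IsEchidna.subset_ground (hS : M.IsEchidna s S) (i : Fin n) : S i ⊆ M.E := hS.1 i

lemma IsEchidna.ncard_eq_two (hS : M.IsEchidna s S) (i : Fin n) : (S i).ncard = 2 := hS.2.1 i

lemma IsEchidna.pairwise_disjoint (hS : M.IsEchidna s S) : Pairwise (Disjoint on S) := hS.2.2.1

lemma IsEchidna.isCircuit_biUnion (hS : M.IsEchidna s S) {I : Finset (Fin n)} (hI : I.card = s) :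
    M.IsCircuit (⋃ i ∈ I, S i) :=
  (hS.2.2.2 I hI).isCircuit

lemma IsEchidna.nonempty (hS : M.IsEchidna s S) (i : Fin n) : (S i).Nonempty :=
  nonempty_of_ncard_ne_zero (by simp [hS.ncard_eq_two i])

theorem IsEchidna.subset_of_isCocircuit (hS : M.IsEchidna s S) (hs : 0 < s)
    (hK : M.IsCocircuit K) (hKfin : K.Finite) (hn : s + K.ncard ≤ n + 1) {i : Fin n}
    (hi : (S i ∩ K).Nonempty) : S i ⊆ K := by
  classical
  obtain ⟨u, hu⟩ := hi
  by_contra hSK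
  have hKS : (K \ ⋃ j ∈ ({i} : Finset (Fin n)), S j).ncard + 1 ≤ K.ncard := by
    rw [Finset.set_biUnion_singleton, ← ncard_inter_add_ncard_sdiff_eq_ncard K (S i) hKfin,
      add_comm]
    gcongr
    exact (ncard_pos (hKfin.inter_of_left _)).mpr ⟨u, hu.2, hu.1⟩
  obtain ⟨F, hFcard, hiF, hFK⟩ :=
    exists_finset_card_eq_forall_disjoint hS.pairwise_disjoint hKfin {i} (k := s - 1)
      (by simp only [Finset.card_singleton, Fintype.card_fin]; omega)
  have hiF : i ∉ F := Finset.disjoint_singleton_left.mp hiF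
  have hD := hS.isCircuit_biUnion (I := insert i F)
    (by rw [Finset.card_insert_of_notMem hiF, hFcard]; omega)
  refine hD.inter_isCocircuit_ne_singleton hK (e := u) ?_
  rw [biUnion_insert_inter_eq_inter hFK]
  exact inter_eq_singleton_of_ncard_eq_two (hS.ncard_eq_two i) hu hSK

theorem IsEchidna.subset_of_isCircuit {t : ℕ} (hS : M.IsEchidna s S) (hs : 0 < s) (ht : 0 < t)
    (hcocirc : ∀ T ⊆ M.E, T.ncard = t → ∃ K, M.IsCocircuit' K ∧ K.ncard = 2 * t ∧ T ⊆ K)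
    (hn : s + 2 * t ≤ n + 1) (hC : M.IsCircuit C) (hCfin : C.Finite) (J : Finset (Fin n))
    (hJ : J.card + (C \ ⋃ j ∈ J, S j).ncard + (t - 1) ≤ n) {i : Fin n} (hiJ : i ∈ J)
    (hi : (S i ∩ C).Nonempty) : S i ⊆ C := by
  classical
  obtain ⟨u, hu⟩ := hi
  by_contra hSC
  obtain ⟨v, hvS, -⟩ := not_subset.mp hSC
  obtain ⟨F, hFcard, hJF, hFC⟩ :=
    exists_finset_card_eq_forall_disjoint hS.pairwise_disjoint hCfin J (k := t - 1)
      (by simpa using hJ)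
  have hiF : i ∉ F := Finset.disjoint_left.mp hJF hiJ
  obtain ⟨x, hxinj, hx⟩ := exists_injective_forall_mem hS.pairwise_disjoint hS.nonempty
  have hvx : v ∉ x '' F := by
    rintro ⟨j, hj, rfl⟩
    exact (hS.pairwise_disjoint (ne_of_mem_of_not_mem hj hiF)).ne_of_mem (hx j) hvS rfl
  obtain ⟨K, hK, hKcard, hTK⟩ := hcocirc (insert v (x '' F))
    (insert_subset (hS.subset_ground i hvS)
      (image_subset_iff.mpr fun j _ ↦ hS.subset_ground j (hx j)))
    (by rw [ncard_insert_of_notMem hvx, ncard_image_of_injective _ hxinj, ncard_coe_finset]; omega)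
  replace hK := hK.isCocircuit
  have hKfin : K.Finite := finite_of_ncard_pos (by omega)
  have hspine : ∀ j ∈ insert i F, S j ⊆ K := by
    intro j hj
    refine hS.subset_of_isCocircuit hs hK hKfin (by omega) ?_
    obtain rfl | hj := Finset.mem_insert.mp hj
    · exact ⟨v, hvS, hTK (mem_insert _ _)⟩
    · exact ⟨x j, hx j, hTK (mem_insert_of_mem _ (mem_image_of_mem x hj))⟩
  have hKeq : ⋃ j ∈ insert i F, S j = K := by
    refine eq_of_subset_of_ncard_le (iUnion₂_subset hspine) ?_ hKfin
    rw [ncard_biUnion_eq_two_mul hS.pairwise_disjoint hS.ncard_eq_two,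
      Finset.card_insert_of_notMem hiF, hFcard]
    omega
  refine hC.inter_isCocircuit_ne_singleton hK (e := u) ?_
  rw [← hKeq, inter_comm, biUnion_insert_inter_eq_inter hFC]
  exact inter_eq_singleton_of_ncard_eq_two (hS.ncard_eq_two i) hu hSC

end Matroid

theorem statement2_general {α : Type u} (s t n : ℕ) (hs : 0 < s) (ht : 0 < t)
    (M : Matroid α) (hM : M.HasProp s (2 * s) t (2 * t))
    (S : Fin n → Set α) (hS : M.IsEchidna s S)
    (hn : max (s + 2 * t) (2 * s + t) - 1 ≤ n)
    (I : Finset (Fin n)) (hI : I.card = s - 1)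
    (z : α) (hz : z ∈ M.E \ ⋃ i ∈ I, S i) :
    ∃ C, M.IsCircuit' C ∧ C.ncard = 2 * s ∧ insert z (⋃ i ∈ I, S i) ⊆ C := by
  obtain ⟨x, hxinj, hx⟩ := exists_injective_forall_mem hS.pairwise_disjoint hS.nonempty
  have hxI : x '' I ⊆ ⋃ i ∈ I, S i := image_subset_iff.mpr fun i hi ↦ mem_biUnion hi (hx i)
  obtain ⟨C, hC, hCcard, hzxC⟩ := hM.1 (insert z (x '' I))
    (insert_subset hz.1 (hxI.trans (iUnion₂_subset fun i _ ↦ hS.subset_ground i)))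
    (by rw [ncard_insert_of_notMem (fun h ↦ hz.2 (hxI h)), ncard_image_of_injective _ hxinj,
      ncard_coe_finset]; omega)
  have hCfin : C.Finite := finite_of_ncard_pos (by omega)
  have houtside : (C \ ⋃ i ∈ I, S i).ncard ≤ s + 1 := by
    have hsplit := ncard_inter_add_ncard_sdiff_eq_ncard C (⋃ i ∈ I, S i) hCfin
    have hinside := ncard_le_ncard (subset_inter ((subset_insert _ _).trans hzxC) hxI)
      (hCfin.inter_of_left _)
    rw [ncard_image_of_injective _ hxinj, ncard_coe_finset] at hinside
    omega
  refine ⟨C, hC, hCcard, insert_subset (hzxC (mem_insert _ _)) (iUnion₂_subset fun i hi ↦ ?_)⟩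
  exact hS.subset_of_isCircuit hs ht hM.2 (by omega) hC.isCircuit hCfin I (by omega) hi
    ⟨x i, hx i, hzxC (mem_insert_of_mem _ (mem_image_of_mem x hi))⟩

/-- If `M` has the `(s,2s,t,2t)`-property and an `s`-echidna of order
`n ≥ max (s+2t) (2s+t) − 1`, then for any `(s−1)`-element set `I ⊆ [n]` and any
`z ∈ E(M) − ⋃_{i ∈ I} S i`, there is a `2s`-element circuit containing `{z} ∪ ⋃_{i ∈ I} S i`. -/
theorem statement2 {α : Type u} (s t n : ℕ) (hs : 0 < s) (ht : 0 < t)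
    (M : Matroid α) (hE : M.E.Finite) (hM : M.HasProp s (2 * s) t (2 * t))
    (S : Fin n → Set α) (hS : M.IsEchidna s S)
    (hn : max (s + 2 * t) (2 * s + t) - 1 ≤ n)
    (I : Finset (Fin n)) (hI : I.card = s - 1)
    (z : α) (hz : z ∈ M.E \ ⋃ i ∈ I, S i) :
    ∃ C, M.IsCircuit' C ∧ C.ncard = 2 * s ∧ insert z (⋃ i ∈ I, S i) ⊆ C :=
  statement2_general s t n hs ht M hM S hS hn I hI z hz
end

section
/- Let s and t be positive integers and let M be a matroid with the (s,2s,t,2t)-property. If M has an s-echidna (S_1,…,S_n) with n ≥ max{s+2t−1, 2s+t−1, 3s+t−3}, then (S_1,…,S_n) extends to a partition (S_1,…,S_n,S_{n+1},…,S_m) of all of E(M) that is simultaneously an s-echidna and a t-coechidna of M. -/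
open Set Function

universe u

open Matroid

/-!
Everything rests on orthogonality: a circuit and a cocircuit never meet in exactly one element.
If every union of `t` spines is a cocircuit, a circuit with at most `n + 1 - t` elements that
meets a spine must contain it, since otherwise it meets the cocircuit formed by that spine and
`t - 1` spines avoiding it in one element. Applied in `M✶` to a `2t`-cocircuit through one element
of each of `t` spines, this makes those spines a cocircuit, so an `s`-echidna is a `t`-coechidna.

For `e` outside the echidna and any `s - 1` spines `J`, the `2s`-circuit through `e` and one
element of each spine of `J` is `{e, f} ∪ ⋃ J` for some `f` outside the echidna. This `f` does not
depend on `J`: dually there is a cocircuit `{e, h} ∪ ⋃ J'` with `J'` disjoint from `J`, and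
orthogonality forces `f = h`. Hence `{e, f}` is a new spine, and we repeat until `E` is covered.
-/

theorem Finset.erase_last_eq_image_castSucc {n : ℕ} (I : Finset (Fin (n + 1))) :
    I.erase (Fin.last n) =
      (I.preimage Fin.castSucc (Fin.castSucc_injective n).injOn).image Fin.castSucc := by
  ext i
  simp only [Finset.mem_erase, Finset.mem_image, Finset.mem_preimage]
  constructor
  · rintro ⟨hne, hi⟩
    obtain ⟨j, rfl⟩ := Fin.exists_castSucc_eq.2 hne
    exact ⟨j, hi, rfl⟩
  · rintro ⟨j, hj, rfl⟩
    exact ⟨(Fin.castSucc_lt_last j).ne, hj⟩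

namespace Matroid

variable {α : Type*}

def HasCircuitProp (M : Matroid α) (s u : ℕ) : Prop :=
  ∀ X ⊆ M.E, X.ncard = s → ∃ C, M.IsCircuit C ∧ C.ncard = u ∧ X ⊆ C

section Spines

variable {M : Matroid α} {n : ℕ} {S : Fin n → Set α} {C : Set α}

lemma ncard_biUnion_of_ncard_eq_two (h2 : ∀ i, (S i).ncard = 2)
    (hdj : Pairwise (Disjoint on S)) (I : Finset (Fin n)) :
    (⋃ i ∈ I, S i).ncard = 2 * I.card := by
  have hfin : ∀ i, (S i).Finite := fun i => finite_of_ncard_pos (by rw [h2 i]; omega)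
  rw [show (⋃ i ∈ I, S i) = ⋃ i ∈ (I : Set (Fin n)), S i by simp,
    I.finite_toSet.ncard_biUnion (fun i _ => hfin i) (fun i _ j _ hij => hdj hij),
    finsum_mem_coe_finset, Finset.sum_congr rfl (fun i _ => h2 i), Finset.sum_const, smul_eq_mul,
    mul_comm]

lemma exists_injective_mem (hne : ∀ i, (S i).Nonempty) (hdj : Pairwise (Disjoint on S)) :
    ∃ w : Fin n → α, Injective w ∧ ∀ i, w i ∈ S i := by
  choose w hw using hne
  exact ⟨w, fun i j hij => by_contra fun hne => (hdj hne).ne_of_mem (hw i) (hw j) hij, hw⟩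

lemma exists_finset_card_eq_forall_disjoint (hdj : Pairwise (Disjoint on S)) (hC : C.Finite)
    {k : ℕ} (hk : C.ncard + k ≤ n) :
    ∃ P : Finset (Fin n), P.card = k ∧ ∀ i ∈ P, Disjoint C (S i) := by
  classical
  set meets := Finset.univ.filter fun i => ¬ Disjoint C (S i)
  have hmeets : meets.card ≤ hC.toFinset.card :=
    Finset.card_le_card_of_forall_subsingleton (fun i x => x ∈ S i)
      (fun i hi => by
        obtain ⟨x, hxC, hxS⟩ := not_disjoint_iff.1 (Finset.mem_filter.1 hi).2
        exact ⟨x, hC.mem_toFinset.2 hxC, hxS⟩)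
      (fun x _ i hi j hj => by_contra fun hij => (hdj hij).ne_of_mem hi.2 hj.2 rfl)
  rw [← ncard_eq_toFinset_card C hC] at hmeets
  obtain ⟨P, hP, hPcard⟩ := Finset.exists_subset_card_eq (s := Finset.univ \ meets) (n := k)
    (by rw [Finset.card_sdiff_of_subset (Finset.subset_univ _), Finset.card_fin]; omega)
  exact ⟨P, hPcard, fun i hi => by simpa [meets] using hP hi⟩

lemma spine_subset_of_isCircuit {b : ℕ} (hS : M✶.IsEchidna b S) (hb : 0 < b)
    (hC : M.IsCircuit C) (hCfin : C.Finite) (hcard : C.ncard + b ≤ n + 1) {j : Fin n}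
    (hj : (C ∩ S j).Nonempty) : S j ⊆ C := by
  obtain ⟨-, h2, hdj, hco⟩ := hS
  by_contra hsub
  obtain ⟨x, hxC, hxS⟩ := hj
  obtain ⟨y, hyS, hyC⟩ := not_subset.1 hsub
  have hk : C.ncard + (b - 1) ≤ n := by omega
  obtain ⟨P, hPcard, hP⟩ := exists_finset_card_eq_forall_disjoint hdj hCfin hk
  have hjP : j ∉ P := fun h => disjoint_left.1 (hP j h) hxC hxS
  have hK : M.IsCocircuit (⋃ i ∈ insert j P, S i) :=
    hco _ (by rw [Finset.card_insert_of_notMem hjP]; omega)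
  have hSj : S j = {x, y} :=
    (eq_of_subset_of_ncard_le (insert_subset hxS (singleton_subset_iff.2 hyS))
      (by rw [h2, ncard_pair (by rintro rfl; exact hyC hxC)])
      (finite_of_ncard_pos (by rw [h2]; omega))).symm
  refine hC.inter_isCocircuit_ne_singleton hK (e := x) ?_
  rw [Finset.set_biUnion_insert, inter_union_distrib_left,
    (disjoint_iUnion₂_right.2 hP).inter_eq, union_empty, hSj]
  rw [inter_insert_of_mem hxC, inter_singleton_eq_empty.2 hyC, insert_empty_eq]

lemma IsEchidna.dual_isEchidna {s t : ℕ} (hS : M.IsEchidna s S) (hs : 0 < s) (ht : 0 < t)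
    (hM : M✶.HasCircuitProp t (2 * t)) (hn : s + 2 * t ≤ n + 1) : M✶.IsEchidna t S := by
  obtain ⟨hSE, h2, hdj, -⟩ := id hS
  refine ⟨hSE, h2, hdj, fun I hI => ?_⟩
  obtain ⟨w, hw_inj, hw⟩ :=
    exists_injective_mem (fun i => nonempty_of_ncard_ne_zero (by rw [h2 i]; omega)) hdj
  obtain ⟨K, hK, hKcard, hwK⟩ := hM (w '' I) (by rintro _ ⟨i, -, rfl⟩; exact hSE i (hw i))
    (by rw [ncard_image_of_injective _ hw_inj, ncard_coe_finset, hI])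
  have hKfin : K.Finite := finite_of_ncard_pos (by omega)
  have hsub : (⋃ i ∈ I, S i) ⊆ K := iUnion₂_subset fun i hi =>
    spine_subset_of_isCircuit (by rwa [dual_dual]) hs hK hKfin (by omega)
      ⟨w i, hwK (mem_image_of_mem w hi), hw i⟩
  rwa [eq_of_subset_of_ncard_le hsub
    (by rw [ncard_biUnion_of_ncard_eq_two h2 hdj, hKcard, hI]) hKfin]

end Spines

section Partners

variable {M : Matroid α} {n : ℕ} {S : Fin n → Set α} {s t : ℕ} {e : α}

lemma exists_isCircuit_pair_union (hS : M✶.IsEchidna t S) (hs : 0 < s) (ht : 0 < t)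
    (hM : M.HasCircuitProp s (2 * s)) (hn : 2 * s + t ≤ n + 1) (he : e ∈ M.E)
    (heS : e ∉ ⋃ i, S i) {J : Finset (Fin n)} (hJ : J.card = s - 1) :
    ∃ f ∈ M.E, f ∉ ⋃ i, S i ∧ f ≠ e ∧ M.IsCircuit ({e, f} ∪ ⋃ i ∈ J, S i) := by
  obtain ⟨hSE, h2, hdj, -⟩ := id hS
  obtain ⟨w, hw_inj, hw⟩ :=
    exists_injective_mem (fun i => nonempty_of_ncard_ne_zero (by rw [h2 i]; omega)) hdj
  have heJ : e ∉ ⋃ i ∈ J, S i := fun h => heS (iUnion₂_subset_iUnion _ _ h)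
  have hew : e ∉ w '' J := fun ⟨i, _, hi⟩ => heS (mem_iUnion.2 ⟨i, hi ▸ hw i⟩)
  obtain ⟨C, hC, hCcard, hXC⟩ := hM (insert e (w '' J))
    (insert_subset he (by rintro _ ⟨i, -, rfl⟩; exact hSE i (hw i)))
    (by rw [ncard_insert_of_notMem hew, ncard_image_of_injective _ hw_inj, ncard_coe_finset, hJ];
        omega)
  have hCfin : C.Finite := finite_of_ncard_pos (by omega)
  have hfull : ∀ k, (C ∩ S k).Nonempty → S k ⊆ C := fun k hk =>
    spine_subset_of_isCircuit hS ht hC hCfin (by omega) hk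
  set D := insert e (⋃ i ∈ J, S i)
  have hDC : D ⊆ C := insert_subset (hXC (mem_insert _ _)) (iUnion₂_subset fun j hj =>
    hfull j ⟨w j, hXC (mem_insert_of_mem _ (mem_image_of_mem w hj)), hw j⟩)
  have hDfin : D.Finite := hCfin.subset hDC
  have hDcard : D.ncard = 2 * s - 1 := by
    rw [ncard_insert_of_notMem heJ (hDfin.subset (subset_insert _ _)),
      ncard_biUnion_of_ncard_eq_two h2 hdj, hJ]
    omega
  obtain ⟨f, hf⟩ : ∃ f, C \ D = {f} := ncard_eq_one.1 (by rw [ncard_sdiff hDC hDfin]; omega)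
  have hfD : f ∉ D := (hf.symm.subset rfl).2
  have hCeq : C = {e, f} ∪ ⋃ i ∈ J, S i := by
    rw [← union_sdiff_cancel hDC, hf, union_singleton, insert_union, singleton_union, insert_comm]
  refine ⟨f, hC.subset_ground (hf.symm.subset rfl).1, fun hfS => ?_,
    fun h => hfD (h ▸ mem_insert _ _), hCeq ▸ hC⟩
  obtain ⟨k, hfk⟩ := mem_iUnion.1 hfS
  have hkJ : k ∉ J := fun hk => hfD (mem_insert_of_mem _ (mem_biUnion hk hfk))
  have hSk : S k ⊆ {f} := by
    rw [← hf]
    refine fun z hz => ⟨hfull k ⟨f, (hf.symm.subset rfl).1, hfk⟩ hz, ?_⟩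
    rintro (rfl | hzJ)
    · exact heS (mem_iUnion.2 ⟨k, hz⟩)
    · obtain ⟨i, hi, hzi⟩ := mem_iUnion₂.1 hzJ
      exact (hdj (ne_of_mem_of_not_mem hi hkJ)).ne_of_mem hzi hz rfl
  have := ncard_le_ncard hSk
  rw [h2, ncard_singleton] at this
  omega

lemma eq_of_isCircuit_pair_union_of_isCocircuit_pair_union (hdj : Pairwise (Disjoint on S))
    {J J' : Finset (Fin n)} (hJJ' : Disjoint J J') {f h : α} (he : e ∉ ⋃ i, S i) (hf : f ∉ ⋃ i, S i)
    (hh : h ∉ ⋃ i, S i) (hC : M.IsCircuit ({e, f} ∪ ⋃ i ∈ J, S i))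
    (hK : M.IsCocircuit ({e, h} ∪ ⋃ i ∈ J', S i)) : f = h := by
  by_contra hfh
  refine hC.inter_isCocircuit_ne_singleton hK (e := e) (Subset.antisymm ?_ (by simp))
  have hef : ∀ x ∈ ({e, f} : Set α), x ∉ ⋃ i, S i := by rintro x (rfl | rfl) <;> assumption
  have heh : ∀ x ∈ ({e, h} : Set α), x ∉ ⋃ i, S i := by rintro x (rfl | rfl) <;> assumption
  rintro z ⟨hz | hz, hz' | hz'⟩
  · obtain rfl | rfl := hz
    · rfl
    · exact hz'.resolve_right hfh
  · exact absurd (iUnion₂_subset_iUnion _ _ hz') (hef z hz)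
  · exact absurd (iUnion₂_subset_iUnion _ _ hz) (heh z hz')
  · obtain ⟨i, hi, hzi⟩ := mem_iUnion₂.1 hz
    obtain ⟨i', hi', hzi'⟩ := mem_iUnion₂.1 hz'
    exact ((hdj (ne_of_mem_of_not_mem hi (Finset.disjoint_right.1 hJJ' hi'))).ne_of_mem hzi hzi'
      rfl).elim

lemma eq_of_isCircuit_pair_union (hS : M.IsEchidna s S) (hs : 0 < s) (ht : 0 < t)
    (hM : M✶.HasCircuitProp t (2 * t)) (hn : s + 2 * t ≤ n + 1) (hn' : 2 * s + t ≤ n + 3)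
    (he : e ∈ M.E) (heS : e ∉ ⋃ i, S i) {f g : α} (hf : f ∉ ⋃ i, S i) (hg : g ∉ ⋃ i, S i)
    {J K : Finset (Fin n)} (hJ : J.card = s - 1) (hK : K.card = s - 1)
    (hCf : M.IsCircuit ({e, f} ∪ ⋃ i ∈ J, S i)) (hCg : M.IsCircuit ({e, g} ∪ ⋃ i ∈ K, S i)) :
    f = g := by
  have hJK : (J ∪ K).card ≤ 2 * s - 2 := (Finset.card_union_le J K).trans (by omega)
  obtain ⟨J', hJ'sub, hJ'⟩ := Finset.exists_subset_card_eq (s := Finset.univ \ (J ∪ K))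
    (n := t - 1)
    (by rw [Finset.card_sdiff_of_subset (Finset.subset_univ _), Finset.card_fin]; omega)
  have hdisj : Disjoint (J ∪ K) J' := Finset.disjoint_of_subset_right hJ'sub Finset.disjoint_sdiff
  obtain ⟨h, -, hhS, -, hK'⟩ := exists_isCircuit_pair_union (M := M✶) (by rwa [dual_dual]) ht hs
    hM (by omega) he heS hJ'
  have hdj := hS.2.2.1
  rw [eq_of_isCircuit_pair_union_of_isCocircuit_pair_union hdj
      (Finset.disjoint_of_subset_left Finset.subset_union_left hdisj) heS hf hhS hCf hK',
    eq_of_isCircuit_pair_union_of_isCocircuit_pair_union hdj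
      (Finset.disjoint_of_subset_left Finset.subset_union_right hdisj) heS hg hhS hCg hK']

end Partners

section Extension

variable {M : Matroid α} {n : ℕ} {S : Fin n → Set α} {s t : ℕ}

lemma IsEchidna.snoc {P : Set α} (hS : M.IsEchidna s S) (hPE : P ⊆ M.E) (hP2 : P.ncard = 2)
    (hPS : Disjoint P (⋃ i, S i))
    (hP : ∀ J : Finset (Fin n), J.card = s - 1 → M.IsCircuit (P ∪ ⋃ i ∈ J, S i)) :
    M.IsEchidna s (Fin.snoc S P) := by
  obtain ⟨hSE, h2, hdj, hcirc⟩ := hS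
  refine ⟨by simpa [Fin.forall_fin_succ'] using ⟨hSE, hPE⟩,
    by simpa [Fin.forall_fin_succ'] using ⟨h2, hP2⟩, ?_, fun I hI => ?_⟩
  · have hSP : ∀ i, Disjoint (S i) P := fun i => (hPS.mono_right (subset_iUnion S i)).symm
    intro i j hij
    induction i using Fin.lastCases <;> induction j using Fin.lastCases <;>
      simp only [onFun, Fin.snoc_castSucc, Fin.snoc_last]
    · exact absurd rfl hij
    · exact (hSP _).symm
    · exact hSP _
    · exact hdj fun h => hij (congrArg _ h)
  set J := I.preimage Fin.castSucc (Fin.castSucc_injective n).injOn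
  have hJI : (I.erase (Fin.last n)).card = J.card := by
    rw [Finset.erase_last_eq_image_castSucc,
      Finset.card_image_of_injective _ (Fin.castSucc_injective n)]
  have hU : (⋃ i ∈ I.erase (Fin.last n), (Fin.snoc S P : Fin (n + 1) → Set α) i) =
      ⋃ j ∈ J, S j := by
    simp [Finset.erase_last_eq_image_castSucc, J]
  by_cases hlast : Fin.last n ∈ I
  · rw [← Finset.insert_erase hlast, Finset.set_biUnion_insert, Fin.snoc_last, hU]
    exact hP J (by rw [← hJI, Finset.card_erase_of_mem hlast, hI])
  · rw [← Finset.erase_eq_of_notMem hlast, hU]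
    exact hcirc J (by rw [← hJI, Finset.erase_eq_of_notMem hlast, hI])

lemma IsEchidna.exists_snoc (hS : M.IsEchidna s S) (hs : 0 < s) (ht : 0 < t)
    (hM : M.HasProp s (2 * s) t (2 * t)) (hn : s + 2 * t ≤ n + 1) (hn' : 2 * s + t ≤ n + 1)
    {e : α} (he : e ∈ M.E) (heS : e ∉ ⋃ i, S i) :
    ∃ f ∉ ⋃ i, S i, f ≠ e ∧ M.IsEchidna s (Fin.snoc S {e, f}) := by
  have hS' := hS.dual_isEchidna hs ht hM.2 hn
  obtain ⟨J₀, -, hJ₀⟩ :=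
    Finset.exists_subset_card_eq (s := (Finset.univ : Finset (Fin n))) (n := s - 1)
      (by rw [Finset.card_fin]; omega)
  obtain ⟨f, hfE, hfS, hfe, hC₀⟩ := exists_isCircuit_pair_union hS' hs ht hM.1 hn' he heS hJ₀
  refine ⟨f, hfS, hfe, hS.snoc (pair_subset he hfE) (ncard_pair hfe.symm)
    (disjoint_left.2 (by rintro x (rfl | rfl) <;> assumption)) fun J hJ => ?_⟩
  obtain ⟨g, -, hgS, -, hC⟩ := exists_isCircuit_pair_union hS' hs ht hM.1 hn' he heS hJ
  rwa [eq_of_isCircuit_pair_union hS hs ht hM.2 hn (by omega) he heS hfS hgS hJ₀ hJ hC₀ hC]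

lemma IsEchidna.exists_extension_iUnion_eq (hS : M.IsEchidna s S) (hs : 0 < s) (ht : 0 < t)
    (hE : M.E.Finite) (hM : M.HasProp s (2 * s) t (2 * t)) (hn : s + 2 * t ≤ n + 1)
    (hn' : 2 * s + t ≤ n + 1) :
    ∃ (m : ℕ) (hnm : n ≤ m) (T : Fin m → Set α),
      (∀ i, T (Fin.castLE hnm i) = S i) ∧ (⋃ i, T i) = M.E ∧ M.IsEchidna s T := by
  induction hk : (M.E \ ⋃ i, S i).ncard using Nat.strong_induction_on generalizing n with
  | _ k IH =>
  by_cases hcov : M.E ⊆ ⋃ i, S i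
  · exact ⟨n, le_rfl, S, fun i => rfl, (iUnion_subset hS.1).antisymm hcov, hS⟩
  obtain ⟨e, he, heS⟩ := not_subset.1 hcov
  obtain ⟨f, -, -, hS'⟩ := hS.exists_snoc hs ht hM hn hn' he heS
  have hlt : (M.E \ ⋃ i, (Fin.snoc S {e, f} : Fin (n + 1) → Set α) i).ncard < k := by
    rw [← hk, iUnion_snoc]
    refine ncard_lt_ncard ⟨sdiff_subset_sdiff_right subset_union_left, fun h => ?_⟩ hE.sdiff
    exact (h ⟨he, heS⟩).2 (Or.inr (mem_insert _ _))
  obtain ⟨m, hnm, T, hTS, hTE, hT⟩ := IH _ hlt hS' (by omega) (by omega) rfl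
  exact ⟨m, (Nat.le_succ n).trans hnm, T, fun i => by simpa using hTS i.castSucc, hTE, hT⟩

end Extension

end Matroid

/-- If `M` has the `(s,2s,t,2t)`-property and an `s`-echidna `(S 1, …, S n)` with
`n ≥ max {s+2t−1, 2s+t−1, 3s+t−3}`, then `(S 1, …, S n)` extends to a partition
`(S 1, …, S n, …, S m)` of all of `E(M)` that is both an `s`-echidna and a `t`-coechidna. -/
theorem statement4 {α : Type u} (s t n : ℕ) (hs : 0 < s) (ht : 0 < t)
    (M : Matroid α) (hE : M.E.Finite) (hM : M.HasProp s (2 * s) t (2 * t))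
    (S : Fin n → Set α) (hS : M.IsEchidna s S)
    (hn : max (s + 2 * t - 1) (max (2 * s + t - 1) (3 * s + t - 3)) ≤ n) :
    ∃ (m : ℕ) (hnm : n ≤ m) (T : Fin m → Set α),
      (∀ i : Fin n, T (Fin.castLE hnm i) = S i) ∧
      (⋃ i, T i) = M.E ∧ M.IsEchidna s T ∧ M✶.IsEchidna t T := by
  obtain ⟨hn₁, hn₂, -⟩ : s + 2 * t - 1 ≤ n ∧ 2 * s + t - 1 ≤ n ∧ _ := by
    simpa only [max_le_iff] using hn
  obtain ⟨m, hnm, T, hTS, hTE, hT⟩ :=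
    hS.exists_extension_iUnion_eq hs ht hE hM (by omega) (by omega)
  exact ⟨m, hnm, T, hTS, hTE, hT, hT.dual_isEchidna hs ht hM.2 (by omega)⟩
end

section
/- Let s and t be positive integers, let M be a matroid with the (s,2s,t,2t)-property, and let X ⊆ E(M). If the rank r(X) = s, then the restriction M|X is the uniform matroid U_{s,|X|} (that is, a subset of X is independent in M if and only if it has at most s elements), and |X| < s + 2t. -/
/-! If a dependent set `Y ⊆ X` had at most `s` elements, a circuit inside it would extend to an
`s`-set lying in a circuit of size `2s`, and circuits form an antichain; so `M|X` is uniform of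
rank `s`. Now take a cocircuit `K` of size `2t` through `t` elements of `X`. The complement of a
cocircuit is closed, so an element of `X ∩ K` is not spanned by `X \ K`; as every `s`-subset of
`X` spans `X`, this forces `|X \ K| < s`, whence `|X| < s + 2t`. -/

open Set Function

namespace Matroid

variable {α : Type*}

variable {M : Matroid α} {s u t v : ℕ} {X Y I K : Set α} {e : α}

lemma isCircuit'_iff : M.IsCircuit' X ↔ M.IsCircuit X := Iff.rfl

lemma isCocircuit'_iff : M.IsCocircuit' X ↔ M.IsCocircuit X := Iff.rfl

lemma Indep.ncard_le_rk' (hX : X.Finite) (hI : M.Indep I) (hIX : I ⊆ X) :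
    I.ncard ≤ M.rk' X :=
  le_csSup ⟨X.ncard, by rintro _ ⟨J, -, hJX, rfl⟩; exact ncard_le_ncard hJX hX⟩
    ⟨I, hI, hIX, rfl⟩

lemma rk'_le_ncard (hX : X.Finite) : M.rk' X ≤ X.ncard :=
  csSup_le' <| by rintro _ ⟨J, -, hJX, rfl⟩; exact ncard_le_ncard hJX hX

lemma HasProp.indep_of_ncard_le (hM : M.HasProp s u t v) (hsu : s < u) (hE : M.E.Finite)
    (hsE : s ≤ M.E.ncard) (hY : Y ⊆ M.E) (hYs : Y.ncard ≤ s) : M.Indep Y := by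
  by_contra hYI
  obtain ⟨C₀, hC₀Y, hC₀⟩ := ((not_indep_iff hY).1 hYI).exists_isCircuit_subset
  have hC₀s : C₀.ncard ≤ s := (ncard_le_ncard hC₀Y (hE.subset hY)).trans hYs
  obtain ⟨S, hC₀S, hSE, hS⟩ := exists_subsuperset_card_eq (hC₀Y.trans hY) hC₀s hsE
  obtain ⟨C, hC, hCu, hSC⟩ := hM.1 S hSE hS
  rw [isCircuit'_iff] at hC
  obtain rfl : C₀ = C := hC₀.eq_of_subset_isCircuit hC (hC₀S.trans hSC)
  omega

lemma IsCocircuit.notMem_closure_compl (hK : M.IsCocircuit K) (he : e ∈ K) :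
    e ∉ M.closure (M.E \ K) := by
  intro hcl
  have hins : M.E \ (K \ {e}) = insert e (M.E \ K) := by
    rw [sdiff_sdiff_right, inter_singleton_of_mem (hK.subset_ground he), union_singleton]
  rw [isCocircuit_iff_minimal_compl_nonspanning, minimal_iff_forall_ssubset] at hK
  have hsp : M.Spanning (M.E \ (K \ {e})) := not_not.1 (hK.2 (sdiff_singleton_ssubset.2 he))
  rw [hins, spanning_iff_ground_subset_closure, closure_insert_eq_of_mem_closure hcl] at hsp
  exact hK.1 ((spanning_iff_ground_subset_closure sdiff_subset).2 hsp)

lemma ncard_sdiff_lt_of_isCocircuit (hX : X.Finite) (hU : ∀ Y ⊆ X, M.Indep Y ↔ Y.ncard ≤ s)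
    (hK : M.IsCocircuit K) (heX : e ∈ X) (heK : e ∈ K) : (X \ K).ncard < s := by
  by_contra! hsX
  obtain ⟨Z, hZXK, hZ⟩ := exists_subset_card_eq hsX
  have hZX : Z ⊆ X := hZXK.trans sdiff_subset
  have heZ : e ∉ Z := fun h ↦ (hZXK h).2 heK
  have hZI : M.Indep Z := (hU Z hZX).2 hZ.le
  have heZI : M.Dep (insert e Z) := by
    refine ⟨fun hI ↦ ?_, insert_subset (hK.subset_ground heK) hZI.subset_ground⟩
    have := (hU _ (insert_subset heX hZX)).1 hI
    rw [ncard_insert_of_notMem heZ (hX.subset hZX)] at this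
    omega
  have heZcl : e ∈ M.closure Z := (hZI.mem_closure_iff_of_notMem heZ).2 heZI
  have hZK : Z ⊆ M.E \ K :=
    subset_sdiff.2 ⟨hZI.subset_ground, disjoint_left.2 fun _ h ↦ (hZXK h).2⟩
  exact hK.notMem_closure_compl heK (M.closure_subset_closure hZK heZcl)

end Matroid

universe u

open Matroid

/-- If `M` has the `(s,2s,t,2t)`-property, `X ⊆ E(M)` and `r(X) = s`, then
`M|X ≅ U_{s,|X|}` (a subset of `X` is independent iff it has at most `s` elements) and
`|X| < s + 2t`. -/
theorem statement6 {α : Type u} (s t : ℕ) (hs : 0 < s) (ht : 0 < t)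
    (M : Matroid α) (hE : M.E.Finite) (hM : M.HasProp s (2 * s) t (2 * t))
    (X : Set α) (hX : X ⊆ M.E) (hr : M.rk' X = s) :
    (∀ Y ⊆ X, (M.Indep Y ↔ Y.ncard ≤ s)) ∧ X.ncard < s + 2 * t := by
  have hXfin : X.Finite := hE.subset hX
  have hsE : s ≤ M.E.ncard := hr ▸ (rk'_le_ncard hXfin).trans (ncard_le_ncard hX hE)
  have hU : ∀ Y ⊆ X, M.Indep Y ↔ Y.ncard ≤ s := fun Y hY ↦
    ⟨fun hI ↦ hr ▸ hI.ncard_le_rk' hXfin hY,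
      hM.indep_of_ncard_le (by omega) hE hsE (hY.trans hX)⟩
  refine ⟨hU, ?_⟩
  obtain htX | htX := lt_or_ge X.ncard t
  · omega
  obtain ⟨T, hTX, hT⟩ := exists_subset_card_eq htX
  obtain ⟨K, hK, hKt, hTK⟩ := hM.2 T (hTX.trans hX) hT
  rw [isCocircuit'_iff] at hK
  obtain ⟨e, heT⟩ : T.Nonempty := nonempty_of_ncard_ne_zero (by omega)
  have hXK : (X \ K).ncard < s :=
    ncard_sdiff_lt_of_isCocircuit hXfin hU hK (hTX heT) (hTK heT)
  have hXK' : (X ∩ K).ncard ≤ 2 * t :=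
    hKt ▸ ncard_le_ncard inter_subset_right (hE.subset hK.subset_ground)
  rw [← ncard_inter_add_ncard_sdiff_eq_ncard X K hXfin]
  omega
end

section
/- There exists a function h : ℕ³ → ℕ such that for all positive integers k, d, t: if M is a matroid having at least h(k,d,t) distinct circuits of size k, and every t-element subset of E(M) is contained in a cocircuit of size 2t, then M has a collection of d pairwise disjoint cocircuits each of size 2t. -/
open Set Function

/-!
The sunflower lemma turns many `k`-circuits into circuits `D i` with a common core `Z` and pairwise
disjoint nonempty petals `D i \ Z`. Split the petals into groups of `t`, pick a point in each petal
of a group and extend these `t` points to a `2t`-element cocircuit `C`. Either `C` meets one of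
these petals in a single point ("is anchored" there), or it meets each of the `t` petals in at least
two points and therefore lies in their union; cocircuits of the second kind coming from different
groups are disjoint.

Many anchored cocircuits are impossible. If an anchored cocircuit that is small compared with the
number of petals met the core in at most one point, orthogonality with every petal circuit would
force it to meet every petal. Given many anchored cocircuits with a common trace `A` on the core,
for most of them, `F`, another one, `F'`, misses the petal where `F` is anchored; strong circuit
elimination in the dual removes a point `z ∈ A` from `F ∪ F'` and keeps the anchor, giving an
anchored cocircuit of at most twice the size with trace in `A \ {z}`. Iterating, the traces drop
below two points.
-/

open scoped Finset Nat

section Combinatorics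

variable {ι α : Type*}

lemma Finset.exists_pairwiseDisjoint_forall_not_disjoint (𝒞 : Finset ι) (A : ι → Set α) :
    ∃ 𝒟 ⊆ 𝒞, (𝒟 : Set ι).PairwiseDisjoint A ∧
      ∀ i ∈ 𝒞, (A i).Nonempty → ∃ j ∈ 𝒟, ¬Disjoint (A i) (A j) := by
  classical
  obtain ⟨𝒟, h𝒟, hmax⟩ := Finset.exists_max_image
    (𝒞.powerset.filter fun 𝒟 : Finset ι => (𝒟 : Set ι).PairwiseDisjoint A) Finset.card
    ⟨∅, by simp⟩
  rw [Finset.mem_filter, Finset.mem_powerset] at h𝒟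
  refine ⟨𝒟, h𝒟.1, h𝒟.2, fun i hi hne => ?_⟩
  by_contra! hdisj
  have hi𝒟 : i ∉ 𝒟 := fun hi𝒟 => hne.ne_empty (disjoint_self.1 (hdisj i hi𝒟))
  have := hmax (insert i 𝒟) <| by
    rw [Finset.mem_filter, Finset.mem_powerset, Finset.coe_insert]
    exact ⟨Finset.insert_subset hi h𝒟.1, h𝒟.2.insert fun j hj _ => hdisj j hj⟩
  rw [Finset.card_insert_of_notMem hi𝒟] at this
  omega

open scoped Classical in
lemma Finset.exists_pairwiseDisjoint_or_exists_lt_card_filter_mem {k P n : ℕ} (𝒞 : Finset ι)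
    (A : ι → Set α) (hA : ∀ i ∈ 𝒞, (A i).Finite ∧ (A i).ncard = k + 1)
    (h𝒞 : (k + 1) * P * n < #𝒞) :
    (∃ 𝒟 ⊆ 𝒞, P ≤ #𝒟 ∧ (𝒟 : Set ι).PairwiseDisjoint A) ∨ ∃ x, n < #{i ∈ 𝒞 | x ∈ A i} := by
  obtain ⟨𝒟, h𝒟𝒞, h𝒟, hmax⟩ := 𝒞.exists_pairwiseDisjoint_forall_not_disjoint A
  refine (le_or_gt P #𝒟).imp (fun hP => ⟨𝒟, h𝒟𝒞, hP, h𝒟⟩) fun hP => ?_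
  have hS : (⋃ j ∈ 𝒟, A j).Finite := 𝒟.finite_toSet.biUnion fun j hj => (hA j (h𝒟𝒞 hj)).1
  have hmeet : ∀ i ∈ 𝒞, ∃ x, x ∈ A i ∧ x ∈ hS.toFinset := by
    intro i hi
    obtain ⟨j, hj, hij⟩ := hmax i hi (Set.nonempty_of_ncard_ne_zero (by rw [(hA i hi).2]; omega))
    obtain ⟨x, hxi, hxj⟩ := Set.not_disjoint_iff.1 hij
    exact ⟨x, hxi, hS.mem_toFinset.2 (Set.mem_iUnion₂.2 ⟨j, hj, hxj⟩)⟩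
  obtain ⟨i₀, hi₀⟩ : 𝒞.Nonempty := Finset.card_pos.1 (by omega)
  have : Nonempty α := ⟨(hmeet i₀ hi₀).choose⟩
  choose! f hfA hfS using hmeet
  have hScard : #hS.toFinset ≤ (k + 1) * P := by
    rw [← Set.ncard_eq_toFinset_card _ hS]
    calc _ ≤ ∑ j ∈ 𝒟, (A j).ncard := Finset.set_ncard_biUnion_le 𝒟 A
      _ = #𝒟 * (k + 1) := by
        rw [Finset.sum_congr rfl fun j hj => (hA j (h𝒟𝒞 hj)).2, Finset.sum_const, smul_eq_mul]
      _ ≤ (k + 1) * P := by nlinarith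
  obtain ⟨x, -, hx⟩ := Finset.exists_lt_card_fiber_of_mul_lt_card_of_maps_to hfS
    ((Nat.mul_le_mul_right n hScard).trans_lt h𝒞)
  refine ⟨x, hx.trans_le (Finset.card_le_card fun i hi => ?_)⟩
  rw [Finset.mem_filter] at hi ⊢
  exact ⟨hi.1, hi.2 ▸ hfA i hi.1⟩

def sunflowerBound (P k : ℕ) : ℕ := k ! * P ^ (k + 1)

theorem Finset.exists_sunflower (P : ℕ) : ∀ (k : ℕ) (𝒞 : Finset ι) (A : ι → Set α),
    (∀ i ∈ 𝒞, (A i).Finite ∧ (A i).ncard = k) → sunflowerBound P k < #𝒞 →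
    ∃ Z, ∃ 𝒟 ⊆ 𝒞, P ≤ #𝒟 ∧ (∀ i ∈ 𝒟, Z ⊆ A i) ∧
      (𝒟 : Set ι).Pairwise fun i j => A i ∩ A j ⊆ Z
  | 0, 𝒞, A, hA, h𝒞 => by
    refine ⟨∅, 𝒞, subset_rfl, by simp [sunflowerBound] at h𝒞; omega,
      fun _ _ => Set.empty_subset _, fun i hi _ _ _ => ?_⟩
    simp [(Set.ncard_eq_zero (hA i hi).1).1 (hA i hi).2]
  | k + 1, 𝒞, A, hA, h𝒞 => by
    classical
    have hbound : (k + 1) * P * sunflowerBound P k < #𝒞 := by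
      convert h𝒞 using 1
      simp only [sunflowerBound, Nat.factorial_succ]
      ring
    obtain ⟨𝒟, h𝒟𝒞, hP, h𝒟⟩ | ⟨x, hx⟩ :=
      𝒞.exists_pairwiseDisjoint_or_exists_lt_card_filter_mem A hA hbound
    · exact ⟨∅, 𝒟, h𝒟𝒞, hP, fun _ _ => Set.empty_subset _,
        fun i hi j hj hij => (h𝒟 hi hj hij).inter_eq.subset⟩
    have hA' : ∀ i ∈ {i ∈ 𝒞 | x ∈ A i}, (A i \ {x}).Finite ∧ (A i \ {x}).ncard = k := by
      intro i hi
      obtain ⟨hi𝒞, hxi⟩ := Finset.mem_filter.1 hi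
      refine ⟨(hA i hi𝒞).1.sdiff, ?_⟩
      rw [Set.ncard_sdiff_singleton_of_mem hxi, (hA i hi𝒞).2, Nat.add_sub_cancel]
    obtain ⟨Z, 𝒟, h𝒟, hP, hZ, hpair⟩ :=
      exists_sunflower P k _ (fun i => A i \ {x}) hA' (by convert hx)
    refine ⟨insert x Z, 𝒟, h𝒟.trans (Finset.filter_subset _ _), hP, fun i hi => ?_,
      fun i hi j hj hij y hy => ?_⟩
    · exact Set.insert_subset (Finset.mem_filter.1 (h𝒟 hi)).2 ((hZ i hi).trans Set.sdiff_subset)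
    · by_cases hyx : y = x
      · exact hyx ▸ Set.mem_insert y Z
      · exact Set.mem_insert_of_mem x (hpair hi hj hij ⟨⟨hy.1, hyx⟩, ⟨hy.2, hyx⟩⟩)

lemma Finset.card_le_ncard_of_inter_nonempty {Q : ι → Set α} (hQ : Pairwise (Disjoint on Q))
    {F : Set α} (hF : F.Finite) {S : Finset ι} (hS : ∀ i ∈ S, (F ∩ Q i).Nonempty) :
    #S ≤ F.ncard := by
  obtain rfl | ⟨i, hi⟩ := S.eq_empty_or_nonempty
  · simp
  have : Nonempty α := ⟨(hS i hi).some⟩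
  choose! y hy using hS
  rw [← Set.ncard_coe_finset]
  refine Set.ncard_le_ncard_of_injOn y (fun i hi => (hy i hi).1) (fun i hi j hj hij => ?_) hF
  by_contra hne
  exact (hQ hne).ne_of_mem (hy i hi).2 (hy j hj).2 hij

open scoped Classical in
lemma Finset.card_filter_forall_not_disjoint_le {Q : ι → Set α} (hQ : Pairwise (Disjoint on Q))
    {S : Finset ι} {F : ι → Set α} {L : ℕ} (hF : ∀ q ∈ S, (F q).Finite ∧ (F q).ncard ≤ L) :
    #{p ∈ S | ∀ q ∈ S, q ≠ p → ¬Disjoint (F q) (Q p)} ≤ L + 1 := by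
  set B := {p ∈ S | ∀ q ∈ S, q ≠ p → ¬Disjoint (F q) (Q p)}
  rcases B.eq_empty_or_nonempty with hB | ⟨q, hq⟩
  · simp [hB]
  have hqS := (Finset.mem_filter.1 hq).1
  have hcard : #(B.erase q) ≤ L := by
    refine (Finset.card_le_ncard_of_inter_nonempty hQ (hF q hqS).1 fun p hp => ?_).trans
      (hF q hqS).2
    obtain ⟨hpq, hp⟩ := Finset.mem_erase.1 hp
    exact Set.not_disjoint_iff_nonempty_inter.1 ((Finset.mem_filter.1 hp).2 q hqS (Ne.symm hpq))
  have := Finset.card_erase_add_one hq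
  omega

open scoped Classical in
lemma Finset.exists_le_card_filter_inter_eq {Z : Set α} (hZ : Z.Finite) {k n : ℕ}
    (hZk : Z.ncard ≤ k) (S : Finset ι) (F : ι → Set α) (h : 2 ^ k * n ≤ #S) :
    ∃ A, n ≤ #{p ∈ S | F p ∩ Z = A} := by
  set T : Finset (Set α) := hZ.toFinset.powerset.image (↑)
  have hT : #T ≤ 2 ^ k := by
    calc #T ≤ #hZ.toFinset.powerset := Finset.card_image_le
      _ = 2 ^ Z.ncard := by rw [Finset.card_powerset, Set.ncard_eq_toFinset_card Z hZ]
      _ ≤ 2 ^ k := Nat.pow_le_pow_right two_pos hZk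
  have hmaps : ∀ p ∈ S, F p ∩ Z ∈ T := fun p _ =>
    Finset.mem_image.2 ⟨(hZ.inter_of_right (F p)).toFinset,
      Finset.mem_powerset.2 (Set.Finite.toFinset_subset_toFinset.2 Set.inter_subset_right),
      Set.Finite.coe_toFinset _⟩
  obtain ⟨A, -, hA⟩ := Finset.exists_le_card_fiber_of_mul_le_card_of_maps_to hmaps
    ⟨∅, Finset.mem_image.2 ⟨∅, Finset.empty_mem_powerset _, Finset.coe_empty⟩⟩
    ((Nat.mul_le_mul_right n hT).trans h)
  exact ⟨A, hA⟩

lemma subset_iUnion_or_exists_inter_eq_singleton {κ : Type*} [Fintype κ] {Q : κ → Set α}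
    (hQ : Pairwise (Disjoint on Q)) {w : κ → α} (hw : ∀ i, w i ∈ Q i) {C : Set α}
    (hC : C.Finite) (hwC : ∀ i, w i ∈ C) (hCcard : C.ncard ≤ 2 * Fintype.card κ) :
    C ⊆ ⋃ i, Q i ∨ ∃ i, C ∩ Q i = {w i} := by
  by_contra! ⟨hCQ, hne⟩
  have htwo : ∀ i, 2 ≤ (C ∩ Q i).ncard := fun i => by
    by_contra! h
    rcases (Set.ncard_le_one_iff_eq (hC.inter_of_left (Q i))).1 (by omega) with h0 | ⟨a, ha⟩
    · exact (h0 ▸ ⟨hwC i, hw i⟩ : w i ∈ (∅ : Set α))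
    · have hwi : w i ∈ C ∩ Q i := ⟨hwC i, hw i⟩
      rw [ha, Set.mem_singleton_iff] at hwi
      exact hne i (hwi ▸ ha)
  have hunion : (C ∩ ⋃ i, Q i).ncard = ∑ i, (C ∩ Q i).ncard := by
    rw [Set.inter_iUnion, Set.ncard_iUnion_of_finite (fun i => hC.inter_of_left _)
      (fun i j hij => (hQ hij).mono Set.inter_subset_right Set.inter_subset_right),
      finsum_eq_sum_of_fintype]
  have hlt := Set.ncard_lt_ncard (Set.inter_ssubset_left_iff.2 hCQ) hC
  have hsum : Finset.univ.card • 2 ≤ ∑ i, (C ∩ Q i).ncard :=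
    Finset.card_nsmul_le_sum _ _ _ fun i _ => htwo i
  rw [smul_eq_mul, Finset.card_univ] at hsum
  omega

lemma disjoint_of_subset_iUnion {G κ : Type*} {Q : G × κ → Set α} (hQ : Pairwise (Disjoint on Q))
    {C C' : Set α} {g g' : G} (hC : C ⊆ ⋃ i, Q (g, i)) (hC' : C' ⊆ ⋃ i, Q (g', i))
    (hgg' : g ≠ g') : Disjoint C C' :=
  (Set.disjoint_iUnion_left.2 fun _ => Set.disjoint_iUnion_right.2 fun _ =>
    hQ fun h => hgg' (Prod.ext_iff.1 h).1).mono hC hC'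

end Combinatorics

namespace Matroid

variable {α ι : Type*} {M : Matroid α}

lemma isCircuit'_iff_s8 {C : Set α} : M.IsCircuit' C ↔ M.IsCircuit C := Iff.rfl

lemma isCocircuit'_iff_s8 {C : Set α} : M.IsCocircuit' C ↔ M.IsCocircuit C := Iff.rfl

theorem exists_isCircuit_sunflower [Fintype ι] (hE : M.E.Finite) {k : ℕ}
    (hcount : sunflowerBound (Fintype.card ι + 1) k < {C | M.IsCircuit C ∧ C.ncard = k}.ncard) :
    ∃ Z : Set α, ∃ D : ι → Set α, (∀ i, M.IsCircuit (D i)) ∧ (∀ i, Z ⊆ D i) ∧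
      Pairwise (Disjoint on fun i => D i \ Z) ∧ (∀ i, (D i \ Z).Nonempty) ∧
      Z.Finite ∧ Z.ncard ≤ k := by
  classical
  have h𝒞 : {C | M.IsCircuit C ∧ C.ncard = k}.Finite :=
    hE.finite_subsets.subset fun C hC => hC.1.subset_ground
  have hcirc : ∀ C ∈ h𝒞.toFinset, M.IsCircuit C ∧ C.ncard = k := fun C hC => h𝒞.mem_toFinset.1 hC
  obtain ⟨Z, 𝒟, h𝒟𝒞, h𝒟, hZ𝒟, hpair⟩ := h𝒞.toFinset.exists_sunflower (Fintype.card ι + 1) k id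
    (fun C hC => ⟨hE.subset (hcirc C hC).1.subset_ground, (hcirc C hC).2⟩)
    (by rwa [← Set.ncard_eq_toFinset_card _ h𝒞])
  obtain ⟨e⟩ := Function.Embedding.nonempty_of_card_le (α := ι) (β := {C // C ∈ 𝒟.erase Z})
    (by rw [Fintype.card_coe]; have := Finset.pred_card_le_card_erase (s := 𝒟) (a := Z); omega)
  have hmem (i : ι) : (e i : Set α) ∈ 𝒟 ∧ (e i : Set α) ≠ Z :=
    ⟨Finset.mem_of_mem_erase (e i).2, Finset.ne_of_mem_erase (e i).2⟩
  obtain ⟨D₀, hD₀⟩ : 𝒟.Nonempty := Finset.card_pos.1 (by omega)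
  have hD₀fin : D₀.Finite := hE.subset (hcirc D₀ (h𝒟𝒞 hD₀)).1.subset_ground
  refine ⟨Z, fun i => e i, fun i => (hcirc _ (h𝒟𝒞 (hmem i).1)).1, fun i => hZ𝒟 _ (hmem i).1,
    fun i j hij => Set.disjoint_left.2 fun y hyi hyj => hyi.2 (hpair (hmem i).1 (hmem j).1
      (fun h => hij (e.injective (Subtype.ext h))) ⟨hyi.1, hyj.1⟩),
    fun i => Set.sdiff_nonempty.2 fun h => (hmem i).2 (h.antisymm (hZ𝒟 _ (hmem i).1)),
    hD₀fin.subset (hZ𝒟 D₀ hD₀), ?_⟩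
  exact (hcirc D₀ (h𝒟𝒞 hD₀)).2 ▸ Set.ncard_le_ncard (hZ𝒟 D₀ hD₀) hD₀fin

lemma IsCircuit.exists_isCircuit_subset_inter_eq_singleton {C₁ C₂ X : Set α} {x z : α}
    (hC₁ : M.IsCircuit C₁) (hC₂ : M.IsCircuit C₂) (hz₁ : z ∈ C₁) (hz₂ : z ∈ C₂)
    (hX₁ : C₁ ∩ X = {x}) (hX₂ : Disjoint C₂ X) :
    ∃ C ⊆ (C₁ ∪ C₂) \ {z}, M.IsCircuit C ∧ C ∩ X = {x} := by
  have hx : x ∈ C₁ ∩ X := hX₁ ▸ rfl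
  obtain ⟨C, hCs, hC, hxC⟩ :=
    hC₁.strong_elimination hC₂ hz₁ hz₂ hx.1 (hX₂.notMem_of_mem_right hx.2)
  refine ⟨C, hCs, hC, Set.Subset.antisymm (fun y ⟨hyC, hyX⟩ => ?_)
    (Set.singleton_subset_iff.2 ⟨hxC, hx.2⟩)⟩
  rcases (hCs hyC).1 with hy₁ | hy₂
  · exact hX₁ ▸ ⟨hy₁, hyX⟩
  · exact absurd hyX (hX₂.notMem_of_mem_left hy₂)

lemma IsCircuit.exists_mem_inter_sdiff_ne {D F Z : Set α} {u : α} (hD : M.IsCircuit D)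
    (hF : M.IsCocircuit F) (huD : u ∈ D) (huF : u ∈ F) (hFZ : F ∩ Z ⊆ {u}) :
    ∃ v ∈ F ∩ (D \ Z), v ≠ u := by
  obtain ⟨v, ⟨hvD, hvF⟩, hvu⟩ : ∃ v ∈ D ∩ F, v ≠ u := by
    by_contra! h
    exact hD.inter_isCocircuit_ne_singleton hF (Set.eq_singleton_iff_unique_mem.2 ⟨⟨huD, huF⟩, h⟩)
  exact ⟨v, ⟨hvF, hvD, fun hvZ => hvu (hFZ ⟨hvF, hvZ⟩)⟩, hvu⟩

section Petals

variable {Z : Set α} {D : ι → Set α}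

lemma two_le_ncard_inter_of_inter_sdiff_eq_singleton [Fintype ι] (hE : M.E.Finite)
    (hD : ∀ i, M.IsCircuit (D i)) (hZD : ∀ i, Z ⊆ D i)
    (hdisj : Pairwise (Disjoint on fun i => D i \ Z)) {F : Set α} (hF : M.IsCocircuit F)
    {p : ι} {x : α} (hFp : F ∩ (D p \ Z) = {x}) (hFcard : F.ncard < Fintype.card ι) :
    2 ≤ (F ∩ Z).ncard := by
  have hFfin : F.Finite := hE.subset hF.subset_ground
  by_contra! h
  rcases (Set.ncard_le_one_iff_eq (hFfin.inter_of_left Z)).1 (by omega) with h0 | ⟨u, hu⟩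
  · have hx : x ∈ F ∩ (D p \ Z) := hFp ▸ rfl
    obtain ⟨v, hv, hvx⟩ :=
      (hD p).exists_mem_inter_sdiff_ne hF hx.2.1 hx.1 (h0 ▸ Set.empty_subset _)
    rw [hFp] at hv
    exact hvx hv
  · have huF : u ∈ F ∩ Z := hu ▸ rfl
    have := Finset.card_le_ncard_of_inter_nonempty hdisj hFfin (S := Finset.univ) fun i _ =>
      let ⟨v, hv, _⟩ := (hD i).exists_mem_inter_sdiff_ne hF (hZD i huF.2) huF.1 hu.subset
      ⟨v, hv⟩
    rw [Finset.card_univ] at this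
    omega

lemma IsCocircuit.exists_isCocircuit_inter_subset_sdiff {F₁ F₂ Q A : Set α} {x z : α}
    (hF₁ : M.IsCocircuit F₁) (hF₂ : M.IsCocircuit F₂) (hF₁Z : F₁ ∩ Z = A) (hF₂Z : F₂ ∩ Z = A)
    (hz : z ∈ A) (hF₁Q : F₁ ∩ Q = {x}) (hF₂Q : Disjoint F₂ Q) :
    ∃ F ⊆ F₁ ∪ F₂, M.IsCocircuit F ∧ F ∩ Z ⊆ A \ {z} ∧ F ∩ Q = {x} := by
  obtain ⟨F, hFs, hF, hFQ⟩ := IsCircuit.exists_isCircuit_subset_inter_eq_singleton hF₁ hF₂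
    (hF₁Z ▸ hz : z ∈ F₁ ∩ Z).1 (hF₂Z ▸ hz : z ∈ F₂ ∩ Z).1 hF₁Q hF₂Q
  refine ⟨F, hFs.trans Set.sdiff_subset, hF, fun y ⟨hyF, hyZ⟩ => ⟨?_, (hFs hyF).2⟩, hFQ⟩
  rcases (hFs hyF).1 with hy | hy
  · exact hF₁Z ▸ ⟨hy, hyZ⟩
  · exact hF₂Z ▸ ⟨hy, hyZ⟩

open scoped Classical in
lemma exists_inter_subset_sdiff_singleton_of_inter_eq (hE : M.E.Finite)
    (hdisj : Pairwise (Disjoint on fun i => D i \ Z)) {S : Finset ι} {F : ι → Set α}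
    {A : Set α} {z : α} {L : ℕ} (hz : z ∈ A)
    (hF : ∀ p ∈ S, M.IsCocircuit (F p) ∧ (F p).ncard ≤ L ∧ F p ∩ Z = A ∧
      ∃ x, F p ∩ (D p \ Z) = {x}) :
    ∃ S' : Finset ι, #S ≤ #S' + (L + 1) ∧ ∃ F' : ι → Set α, ∀ p ∈ S',
      M.IsCocircuit (F' p) ∧ (F' p).ncard ≤ 2 * L ∧ F' p ∩ Z ⊆ A \ {z} ∧
        ∃ x, F' p ∩ (D p \ Z) = {x} := by
  have hfin : ∀ p ∈ S, (F p).Finite := fun p hp => hE.subset (hF p hp).1.subset_ground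
  have hbad := Finset.card_filter_forall_not_disjoint_le hdisj (S := S) (F := F) (L := L)
    fun q hq => ⟨hfin q hq, (hF q hq).2.1⟩
  have hgood : ∀ p ∈ {p ∈ S | ¬∀ q ∈ S, q ≠ p → ¬Disjoint (F q) (D p \ Z)}, ∃ F' : Set α,
      M.IsCocircuit F' ∧ F'.ncard ≤ 2 * L ∧ F' ∩ Z ⊆ A \ {z} ∧ ∃ x, F' ∩ (D p \ Z) = {x} := by
    intro p hp
    obtain ⟨hpS, hp⟩ := Finset.mem_filter.1 hp
    push Not at hp
    obtain ⟨q, hqS, -, hq⟩ := hp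
    obtain ⟨hFp, hFpL, hFpZ, x, hx⟩ := hF p hpS
    obtain ⟨hFq, hFqL, hFqZ, -⟩ := hF q hqS
    obtain ⟨F', hF's, hF', hF'Z, hF'x⟩ :=
      hFp.exists_isCocircuit_inter_subset_sdiff hFq hFpZ hFqZ hz hx hq
    refine ⟨F', hF', ?_, hF'Z, x, hF'x⟩
    calc F'.ncard ≤ (F p ∪ F q).ncard := Set.ncard_le_ncard hF's ((hfin p hpS).union (hfin q hqS))
      _ ≤ (F p).ncard + (F q).ncard := Set.ncard_union_le _ _
      _ ≤ 2 * L := by omega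
  choose! F' hF' using hgood
  refine ⟨_, ?_, F', hF'⟩
  have := Finset.card_filter_add_card_filter_not (s := S)
    (fun p => ∀ q ∈ S, q ≠ p → ¬Disjoint (F q) (D p \ Z))
  omega

/-- Where the recursion comes from: anchored cocircuits of size `≤ L` fall into at most `2 ^ k`
classes by their trace on the core, and elimination inside one class loses at most `L + 1` members
and yields cocircuits of size `≤ 2 * L` with a smaller trace. -/
def anchorBound (k : ℕ) : ℕ → ℕ → ℕ
  | 0, L => L + 1
  | s + 1, L => 2 ^ k * (anchorBound k s (2 * L) + (L + 1))

lemma lt_anchorBound (k s L : ℕ) : L < anchorBound k s L := by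
  induction s generalizing L with
  | zero => exact Nat.lt_succ_self L
  | succ s ih =>
    have := ih (2 * L)
    have := Nat.one_le_two_pow (n := k)
    simp only [anchorBound]
    nlinarith

lemma exists_anchorBound_le_of_anchorBound_succ_le [Fintype ι] (hE : M.E.Finite)
    (hD : ∀ i, M.IsCircuit (D i)) (hZD : ∀ i, Z ⊆ D i)
    (hdisj : Pairwise (Disjoint on fun i => D i \ Z)) (hZ : Z.Finite) {k s L : ℕ}
    (hZk : Z.ncard ≤ k) {S : Finset ι} {F : ι → Set α}
    (hF : ∀ p ∈ S, M.IsCocircuit (F p) ∧ (F p).ncard ≤ L ∧ (F p ∩ Z).ncard ≤ s + 1 ∧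
      ∃ x, F p ∩ (D p \ Z) = {x})
    (hS : anchorBound k (s + 1) L ≤ #S) :
    ∃ (S' : Finset ι) (F' : ι → Set α), anchorBound k s (2 * L) ≤ #S' ∧
      ∀ p ∈ S', M.IsCocircuit (F' p) ∧ (F' p).ncard ≤ 2 * L ∧ (F' p ∩ Z).ncard ≤ s ∧
        ∃ x, F' p ∩ (D p \ Z) = {x} := by
  classical
  have hL : L + 1 ≤ #S := (lt_anchorBound k (s + 1) L).trans_le hS
  obtain ⟨A, hA⟩ := S.exists_le_card_filter_inter_eq hZ hZk F hS
  obtain ⟨p, hp⟩ : {p ∈ S | F p ∩ Z = A}.Nonempty := Finset.card_pos.1 (by omega)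
  obtain ⟨hpS, hpA⟩ := Finset.mem_filter.1 hp
  obtain ⟨hFp, hFpL, hFpZ, x, hx⟩ := hF p hpS
  have h2 := two_le_ncard_inter_of_inter_sdiff_eq_singleton hE hD hZD hdisj hFp hx
    (by have := S.card_le_univ; omega)
  rw [hpA] at h2 hFpZ
  obtain ⟨z, hz⟩ := Set.nonempty_of_ncard_ne_zero (s := A) (by omega)
  obtain ⟨S', hS', F', hF'⟩ := exists_inter_subset_sdiff_singleton_of_inter_eq hE hdisj hz
    (S := {p ∈ S | F p ∩ Z = A}) (F := F) (L := L) fun q hq =>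
      let ⟨hqS, hqA⟩ := Finset.mem_filter.1 hq
      ⟨(hF q hqS).1, (hF q hqS).2.1, hqA, (hF q hqS).2.2.2⟩
  refine ⟨S', F', by omega, fun q hq => ⟨(hF' q hq).1, (hF' q hq).2.1, ?_, (hF' q hq).2.2.2⟩⟩
  calc (F' q ∩ Z).ncard ≤ (A \ {z}).ncard :=
        Set.ncard_le_ncard (hF' q hq).2.2.1 (hZ.subset (hpA ▸ Set.inter_subset_right)).sdiff
    _ = A.ncard - 1 := Set.ncard_sdiff_singleton_of_mem hz
    _ ≤ s := by omega

theorem card_lt_anchorBound [Fintype ι] (hE : M.E.Finite) (hD : ∀ i, M.IsCircuit (D i))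
    (hZD : ∀ i, Z ⊆ D i) (hdisj : Pairwise (Disjoint on fun i => D i \ Z)) (hZ : Z.Finite)
    {k : ℕ} (hZk : Z.ncard ≤ k) (s : ℕ) : ∀ (L : ℕ) (S : Finset ι) (F : ι → Set α),
      (∀ p ∈ S, M.IsCocircuit (F p) ∧ (F p).ncard ≤ L ∧ (F p ∩ Z).ncard ≤ s ∧
        ∃ x, F p ∩ (D p \ Z) = {x}) → #S < anchorBound k s L := by
  induction s with
  | zero =>
    intro L S F hF
    by_contra! hS
    obtain ⟨p, hp⟩ : S.Nonempty := Finset.card_pos.1 (by simp only [anchorBound] at hS; omega)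
    obtain ⟨hFp, hFpL, hFpZ, x, hx⟩ := hF p hp
    have := two_le_ncard_inter_of_inter_sdiff_eq_singleton hE hD hZD hdisj hFp hx
      (by have := S.card_le_univ; simp only [anchorBound] at hS; omega)
    omega
  | succ s ih =>
    intro L S F hF
    by_contra! hS
    obtain ⟨S', F', hS', hF'⟩ :=
      exists_anchorBound_le_of_anchorBound_succ_le hE hD hZD hdisj hZ hZk hF hS
    exact (ih _ S' F' hF').not_ge hS'

end Petals

lemma exists_isCocircuit_subset_iUnion_or_inter_eq_singleton {κ : Type*} [Fintype κ]
    (hE : M.E.Finite) {Z : Set α} {D : κ → Set α} (hDE : ∀ i, D i ⊆ M.E)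
    (hdisj : Pairwise (Disjoint on fun i => D i \ Z)) (hpetal : ∀ i, (D i \ Z).Nonempty)
    (hcocirc : ∀ T ⊆ M.E, T.ncard = Fintype.card κ →
      ∃ C, M.IsCocircuit C ∧ C.ncard = 2 * Fintype.card κ ∧ T ⊆ C) :
    ∃ C, M.IsCocircuit C ∧ C.ncard = 2 * Fintype.card κ ∧ (C ∩ Z).ncard ≤ Fintype.card κ ∧
      (C ⊆ ⋃ i, D i \ Z ∨ ∃ i x, C ∩ (D i \ Z) = {x}) := by
  choose w hw using hpetal
  have hTcard : (Set.range w).ncard = Fintype.card κ := by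
    rw [Set.ncard_range_of_injective fun i j hij => by_contra fun hne =>
      (hdisj hne).ne_of_mem (hw _) (hw _) hij, Nat.card_eq_fintype_card]
  obtain ⟨C, hC, hCcard, hTC⟩ :=
    hcocirc _ (Set.range_subset_iff.2 fun i => hDE i (hw i).1) hTcard
  have hCfin : C.Finite := hE.subset hC.subset_ground
  have htrace : (C ∩ Z).ncard ≤ Fintype.card κ := by
    have := Set.ncard_le_ncard (Set.range_subset_iff.2 fun i =>
      (⟨hTC ⟨i, rfl⟩, (hw i).2⟩ : w i ∈ C \ Z)) hCfin.sdiff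
    have := Set.ncard_inter_add_ncard_sdiff_eq_ncard C Z hCfin
    omega
  refine ⟨C, hC, hCcard, htrace, ?_⟩
  exact (subset_iUnion_or_exists_inter_eq_singleton hdisj hw hCfin (fun i => hTC ⟨i, rfl⟩)
    hCcard.le).imp_right fun ⟨i, hi⟩ => ⟨i, w i, hi⟩

theorem exists_pairwise_disjoint_isCocircuit {G κ : Type*} [Fintype G] [Fintype κ]
    (hE : M.E.Finite) {Z : Set α} {D : G × κ → Set α} (hD : ∀ i, M.IsCircuit (D i))
    (hZD : ∀ i, Z ⊆ D i) (hdisj : Pairwise (Disjoint on fun i => D i \ Z))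
    (hpetal : ∀ i, (D i \ Z).Nonempty) (hZ : Z.Finite) {k : ℕ} (hZk : Z.ncard ≤ k)
    (hcocirc : ∀ T ⊆ M.E, T.ncard = Fintype.card κ →
      ∃ C, M.IsCocircuit C ∧ C.ncard = 2 * Fintype.card κ ∧ T ⊆ C)
    {d : ℕ} (hG : d + anchorBound k (Fintype.card κ) (2 * Fintype.card κ) ≤ Fintype.card G) :
    ∃ Cs : Fin d → Set α, Pairwise (Disjoint on Cs) ∧
      ∀ j, M.IsCocircuit (Cs j) ∧ (Cs j).ncard = 2 * Fintype.card κ := by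
  classical
  choose C hC hCcard htrace hgroup using fun g =>
    exists_isCocircuit_subset_iUnion_or_inter_eq_singleton hE (D := fun i => D (g, i))
      (fun i => (hD _).subset_ground) (hdisj.comp_of_injective (Prod.mk_right_injective g))
      (fun i => hpetal _) hcocirc
  by_cases hd : d ≤ #{g | C g ⊆ ⋃ i, D (g, i) \ Z}
  · obtain ⟨e⟩ := Function.Embedding.nonempty_of_card_le (α := Fin d)
      (β := {g // g ∈ ({g | C g ⊆ ⋃ i, D (g, i) \ Z} : Finset G)})
      (by rwa [Fintype.card_fin, Fintype.card_coe])
    refine ⟨fun j => C (e j), fun j j' hjj' => ?_, fun j => ⟨hC _, hCcard _⟩⟩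
    exact disjoint_of_subset_iUnion hdisj (Finset.mem_filter.1 (e j).2).2
      (Finset.mem_filter.1 (e j').2).2 fun h => hjj' (e.injective (Subtype.ext h))
  · have hS := card_lt_anchorBound hE hD hZD hdisj hZ hZk (Fintype.card κ) (2 * Fintype.card κ)
      {p | ∃ x, C p.1 ∩ (D p \ Z) = {x}} (fun p => C p.1)
      fun p hp => ⟨hC p.1, (hCcard p.1).le, htrace p.1, (Finset.mem_filter.1 hp).2⟩
    have hU : #{g | ¬C g ⊆ ⋃ i, D (g, i) \ Z} ≤ #{p | ∃ x, C p.1 ∩ (D p \ Z) = {x}} :=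
      Finset.card_le_card_of_surjOn Prod.fst fun g hg => by
        obtain ⟨i, hi⟩ := (hgroup g).resolve_left (Finset.mem_filter.1 hg).2
        exact ⟨(g, i), Finset.mem_filter.2 ⟨Finset.mem_univ _, hi⟩, rfl⟩
    have := Finset.card_filter_add_card_filter_not (s := Finset.univ)
      (fun g => C g ⊆ ⋃ i, D (g, i) \ Z)
    rw [Finset.card_univ] at this
    omega

end Matroid

universe u

open Matroid

/-- There is a function `h : ℕ³ → ℕ` such that any (finite) matroid with at least
`h(k,d,t)` distinct `k`-element circuits, in which every `t`-element set is contained in a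
`2t`-element cocircuit, has `d` pairwise disjoint `2t`-element cocircuits. -/
theorem statement8 :
    ∃ h : ℕ × ℕ × ℕ → ℕ, ∀ (k d t : ℕ), 0 < k → 0 < d → 0 < t →
      ∀ {α : Type u} (M : Matroid α), M.E.Finite →
        h (k, d, t) ≤ {C : Set α | M.IsCircuit' C ∧ C.ncard = k}.ncard →
        (∀ T ⊆ M.E, T.ncard = t → ∃ C, M.IsCocircuit' C ∧ C.ncard = 2 * t ∧ T ⊆ C) →
        ∃ Cs : Fin d → Set α, Pairwise (Function.onFun Disjoint Cs) ∧
          ∀ i, M.IsCocircuit' (Cs i) ∧ (Cs i).ncard = 2 * t := by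
  refine ⟨fun ⟨k, d, t⟩ => sunflowerBound ((d + anchorBound k t (2 * t)) * t + 1) k + 1, ?_⟩
  intro k d t _ _ _ α M hE hcount hcocirc
  obtain ⟨Z, D, hD, hZD, hdisj, hpetal, hZ, hZk⟩ :=
    exists_isCircuit_sunflower (ι := Fin (d + anchorBound k t (2 * t)) × Fin t) hE
      (by simpa [isCircuit'_iff_s8] using hcount)
  simpa [isCocircuit'_iff_s8] using exists_pairwise_disjoint_isCocircuit hE hD hZD hdisj hpetal hZ hZk
    (by simpa [isCocircuit'_iff_s8] using hcocirc) (d := d) (by simp)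
end

section
/- Let t be a positive integer. If M is a matroid with the (1,2,t,2t)-property and |E(M)| ≥ t, then M is a (1,t)-spike. -/
open Set Function

/-!
A circuit and a cocircuit never meet in exactly one element, so every cocircuit is a union of
parallel classes, and by hypothesis every parallel class has at least two elements. Suppose some
class has three. If there are at least `t` classes, a cocircuit of size `2t` containing
representatives of `t` of them, the large one among them, would contain more than `2t` elements.
Otherwise a `t`-set meeting every class lies in a cocircuit that is the whole ground set; then
every element spans `M`, so the ground set is a single parallel class, of size `2t`. In either case
every parallel class has even size, so the ground set splits into parallel pairs, and the union of
any `t` pairs is the cocircuit of size `2t` that contains one element from each of them.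
-/

lemma Set.exists_eq_pair_of_ncard_eq_two {α : Type*} {s : Set α} {a : α} (hs : s.ncard = 2)
    (ha : a ∈ s) : ∃ b, a ≠ b ∧ s = {a, b} := by
  have hsa : (s \ {a}).ncard = 1 := by rw [ncard_sdiff_singleton_of_mem ha, hs]
  obtain ⟨b, hb⟩ := ncard_eq_one.1 hsa
  refine ⟨b, fun hab ↦ (hb.symm ▸ mem_singleton b : b ∈ s \ {a}).2 hab.symm, ?_⟩
  rw [← insert_sdiff_self_of_mem ha, hb]

lemma Set.Finite.ncard_biUnion_eq_mul {ι α : Type*} {T : Set ι} (hT : T.Finite) {s : ι → Set α}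
    (hs : ∀ i ∈ T, (s i).Finite) (hdisj : T.PairwiseDisjoint s) {n : ℕ}
    (hn : ∀ i ∈ T, (s i).ncard = n) : (⋃ i ∈ T, s i).ncard = n * T.ncard := by
  rw [hT.ncard_biUnion hs hdisj, finsum_mem_congr rfl hn, finsum_mem_eq_finite_toFinset_sum _ hT,
    Finset.sum_const, smul_eq_mul, ncard_eq_toFinset_card T hT, mul_comm]

lemma Set.Finite.mul_ncard_lt_ncard_biUnion {ι α : Type*} {T : Set ι} (hT : T.Finite)
    {s : ι → Set α} (hs : ∀ i ∈ T, (s i).Finite) (hdisj : T.PairwiseDisjoint s) {n : ℕ}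
    (hle : ∀ i ∈ T, n ≤ (s i).ncard) (hlt : ∃ i ∈ T, n < (s i).ncard) :
    n * T.ncard < (⋃ i ∈ T, s i).ncard := by
  rw [hT.ncard_biUnion hs hdisj, finsum_mem_eq_finite_toFinset_sum _ hT,
    ncard_eq_toFinset_card T hT, mul_comm, ← smul_eq_mul, ← Finset.sum_const]
  obtain ⟨i, hi, hni⟩ := hlt
  exact Finset.sum_lt_sum (fun j hj ↦ hle j (hT.mem_toFinset.1 hj)) ⟨i, hT.mem_toFinset.2 hi, hni⟩

lemma Fin.pairwise_disjoint_cons {α : Type*} {m : ℕ} {P : Set α} {A : Fin m → Set α}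
    (hP : ∀ i, Disjoint P (A i)) (hA : Pairwise (Disjoint on A)) :
    Pairwise (Disjoint on (Fin.cons P A : Fin (m + 1) → Set α)) := by
  intro i j hij
  cases i using Fin.cases <;> cases j using Fin.cases
  · exact absurd rfl hij
  · exact hP _
  · exact (hP _).symm
  · exact hA (fun h ↦ hij (congrArg Fin.succ h))

lemma Set.Finite.even_ncard_fibers_sdiff_pair {α β : Type*} {f : α → β} {S : Set α} {x y : α}
    (hS : S.Finite) (heven : ∀ x ∈ S, Even {y ∈ S | f y = f x}.ncard) (hx : x ∈ S) (hy : y ∈ S)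
    (hne : x ≠ y) (hxy : f x = f y) :
    ∀ z ∈ S \ {x, y}, Even {w ∈ S \ {x, y} | f w = f z}.ncard := by
  intro z hz
  have hsep : {w ∈ S \ {x, y} | f w = f z} = {w ∈ S | f w = f z} \ {x, y} := by
    ext w; simp only [mem_ofPred_eq, mem_sdiff]; tauto
  have hfiber := hS.subset (sep_subset S fun w ↦ f w = f z)
  rw [hsep]
  by_cases hzx : f z = f x
  · have hsub : {x, y} ⊆ {w ∈ S | f w = f z} :=
      insert_subset ⟨hx, hzx.symm⟩ (singleton_subset_iff.2 ⟨hy, hxy.symm.trans hzx.symm⟩)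
    rw [ncard_sdiff hsub (hfiber.subset hsub)]
    exact (Nat.even_sub (ncard_le_ncard hsub hfiber)).2
      (iff_of_true (heven z hz.1) (ncard_pair hne ▸ even_two))
  · rw [Disjoint.sdiff_eq_left]
    · exact heven z hz.1
    · simp only [disjoint_insert_right, disjoint_singleton_right, mem_sep_iff, not_and]
      exact ⟨fun _ h ↦ hzx h.symm, fun _ h ↦ hzx (h.symm.trans hxy.symm)⟩

lemma Set.Finite.exists_pairs_partition_of_even_fibers {α β : Type*} {f : α → β} {S : Set α}
    (hS : S.Finite) (heven : ∀ x ∈ S, Even {y ∈ S | f y = f x}.ncard) :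
    ∃ (m : ℕ) (A : Fin m → Set α), (⋃ i, A i) = S ∧ Pairwise (Disjoint on A) ∧
      ∀ i, ∃ x y, x ≠ y ∧ f x = f y ∧ A i = {x, y} := by
  induction h : S.ncard using Nat.strong_induction_on generalizing S with
  | _ n ih =>
  obtain rfl | ⟨x, hx⟩ := S.eq_empty_or_nonempty
  · exact ⟨0, Fin.elim0, by simp, fun i ↦ i.elim0, fun i ↦ i.elim0⟩
  have hfiber : 1 < {y ∈ S | f y = f x}.ncard := by
    have hpos : 0 < {y ∈ S | f y = f x}.ncard :=
      (ncard_pos (hS.subset (sep_subset S _))).2 ⟨x, hx, rfl⟩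
    obtain ⟨k, hk⟩ := heven x hx
    omega
  obtain ⟨y, ⟨hyS, hyx⟩, hne⟩ := exists_ne_of_one_lt_ncard hfiber x
  have hxyS : {x, y} ⊆ S := insert_subset hx (singleton_subset_iff.2 hyS)
  have hlt : (S \ {x, y}).ncard < n := by
    rw [ncard_sdiff hxyS (hS.subset hxyS), ncard_pair hne.symm, h]
    have := ncard_le_ncard hxyS hS
    rw [ncard_pair hne.symm] at this
    omega
  obtain ⟨m, A, hAU, hAdisj, hApair⟩ :=
    ih _ hlt hS.sdiff (hS.even_ncard_fibers_sdiff_pair heven hx hyS hne.symm hyx.symm) rfl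
  refine ⟨m + 1, Fin.cons {x, y} A, ?_, Fin.pairwise_disjoint_cons ?_ hAdisj, ?_⟩
  · rw [iUnion_cons, hAU, union_sdiff_cancel hxyS]
  · exact fun i ↦ disjoint_sdiff_right.mono_right (hAU ▸ subset_iUnion A i)
  · intro i
    cases i using Fin.cases
    · exact ⟨x, y, hne.symm, hyx.symm, rfl⟩
    · exact hApair _

namespace Matroid

variable {α : Type*} {M : Matroid α} {K T : Set α} {a e f : α} {t : ℕ}

/-- For a nonloop `e`, this is `e` together with the elements parallel to it. -/
def parallelClass (M : Matroid α) (e : α) : Set α := {f ∈ M.E | M.closure {f} = M.closure {e}}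

lemma parallelClass_subset_ground (M : Matroid α) (e : α) : M.parallelClass e ⊆ M.E :=
  sep_subset _ _

lemma pairwiseDisjoint_parallelClass (hT : InjOn (fun e ↦ M.closure {e}) T) :
    T.PairwiseDisjoint M.parallelClass :=
  fun _ hx _ hy hxy ↦ disjoint_left.2 fun _ hzx hzy ↦ hxy (hT hx hy (hzx.2.symm.trans hzy.2))

lemma IsCircuit.isNonloop_of_pair (hC : M.IsCircuit {e, f}) (hef : e ≠ f) : M.IsNonloop e :=
  indep_singleton.1 (pair_sdiff_right hef ▸ hC.sdiff_singleton_indep (mem_insert_of_mem e rfl))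

lemma IsCircuit.mem_parallelClass (hC : M.IsCircuit {e, f}) (hef : e ≠ f) :
    f ∈ M.parallelClass e :=
  ⟨hC.subset_ground (mem_insert_of_mem e rfl),
    (((hC.isNonloop_of_pair hef).closure_eq_closure_iff_isCircuit_of_ne hef).2 hC).symm⟩

lemma IsCocircuit.parallelClass_subset (hK : M.IsCocircuit K) (he : e ∈ K) :
    M.parallelClass e ⊆ K := by
  rintro f ⟨-, hfe⟩
  obtain rfl | hef := eq_or_ne e f
  · exact he
  by_contra hfK
  have hC := ((hK.isNonloop_of_mem he).closure_eq_closure_iff_isCircuit_of_ne hef).1 hfe.symm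
  exact hC.inter_isCocircuit_ne_singleton hK (e := e) (by simp [insert_inter_of_mem he, hfK])

lemma parallelClass_eq_ground (hE : M.IsCocircuit M.E) (he : e ∈ M.E) :
    M.parallelClass e = M.E := by
  have hspan : ∀ x ∈ M.E, M.closure {x} = M.E := by
    intro x hx
    have hco : M.Coindep (M.E \ {x}) := hE.ssubset_indep (sdiff_singleton_ssubset.2 hx)
    have hsp := hco.compl_spanning
    rw [sdiff_sdiff_cancel_left (singleton_subset_iff.2 hx)] at hsp
    exact hsp.closure_eq
  exact subset_antisymm (sep_subset _ _) fun x hx ↦ ⟨hx, by rw [hspan x hx, hspan e he]⟩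

lemma isCocircuit_ground_of_two_lt_ncard_parallelClass (ht : 0 < t) (hE : M.E.Finite)
    (hcocirc : ∀ T ⊆ M.E, T.ncard = t → ∃ K, M.IsCocircuit K ∧ K.ncard = 2 * t ∧ T ⊆ K)
    (hcard : t ≤ M.E.ncard) (hpar : ∀ e ∈ M.E, 2 ≤ (M.parallelClass e).ncard)
    (ha : a ∈ M.E) (ha3 : 2 < (M.parallelClass a).ncard) : M.IsCocircuit M.E := by
  obtain ⟨T₀, hT₀E, hbij⟩ := exists_subset_bijOn M.E (fun e ↦ M.closure {e})
  have hrep : ∀ e ∈ M.E, ∃ r ∈ T₀, M.parallelClass r = M.parallelClass e := by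
    intro e he
    obtain ⟨r, hr, hre⟩ := hbij.image_eq.symm ▸ mem_image_of_mem _ he
    exact ⟨r, hr, by simp only [parallelClass, hre]⟩
  by_cases htT₀ : t ≤ T₀.ncard
  · exfalso
    obtain ⟨r, hr, hra⟩ := hrep a ha
    obtain ⟨T, hrT, hTT₀, hTt⟩ := exists_subsuperset_card_eq (singleton_subset_iff.2 hr)
      (by rw [ncard_singleton]; exact ht) htT₀
    obtain ⟨K, hK, hK2, hTK⟩ := hcocirc T (hTT₀.trans hT₀E) hTt
    have hclK : (⋃ x ∈ T, M.parallelClass x) ⊆ K :=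
      iUnion₂_subset fun x hx ↦ hK.parallelClass_subset (hTK hx)
    have hlt : 2 * T.ncard < (⋃ x ∈ T, M.parallelClass x).ncard :=
      (hE.subset (hTT₀.trans hT₀E)).mul_ncard_lt_ncard_biUnion
        (fun x _ ↦ hE.subset (M.parallelClass_subset_ground x))
        (pairwiseDisjoint_parallelClass (hbij.injOn.mono hTT₀))
        (fun x hx ↦ hpar x (hT₀E (hTT₀ hx))) ⟨r, hrT rfl, hra ▸ ha3⟩
    have := ncard_le_ncard hclK (hE.subset hK.subset_ground)
    omega
  · obtain ⟨T, hT₀T, hTE, hTt⟩ := exists_subsuperset_card_eq hT₀E (by omega) hcard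
    obtain ⟨K, hK, -, hTK⟩ := hcocirc T hTE hTt
    have hEK : M.E ⊆ K := fun e he ↦
      let ⟨r, hr, hre⟩ := hrep e he
      hK.parallelClass_subset (hTK (hT₀T hr)) (hre ▸ ⟨he, rfl⟩)
    rwa [subset_antisymm hK.subset_ground hEK] at hK

lemma even_ncard_parallelClass (ht : 0 < t) (hE : M.E.Finite)
    (hcocirc : ∀ T ⊆ M.E, T.ncard = t → ∃ K, M.IsCocircuit K ∧ K.ncard = 2 * t ∧ T ⊆ K)
    (hcard : t ≤ M.E.ncard) (hpar : ∀ e ∈ M.E, 2 ≤ (M.parallelClass e).ncard) :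
    ∀ e ∈ M.E, Even (M.parallelClass e).ncard := by
  by_cases h : ∃ a ∈ M.E, 2 < (M.parallelClass a).ncard
  · obtain ⟨a, ha, ha3⟩ := h
    have hEK := isCocircuit_ground_of_two_lt_ncard_parallelClass ht hE hcocirc hcard hpar ha ha3
    obtain ⟨T, hTE, hTt⟩ := exists_subset_card_eq hcard
    obtain ⟨K, hK, hK2, -⟩ := hcocirc T hTE hTt
    have hKE : K = M.E := IsCircuit.eq_of_subset_isCircuit hK hEK hK.subset_ground
    intro e he
    rw [parallelClass_eq_ground hEK he, ← hKE, hK2]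
    exact even_two_mul t
  · push Not at h
    intro e he
    rw [le_antisymm (h e he) (hpar e he)]
    exact even_two

lemma isSpike_of_partition_into_parallel_pairs [M.Loopless] {m : ℕ} {A : Fin m → Set α}
    (ht : 0 < t) (hE : M.E.Finite)
    (hcocirc : ∀ T ⊆ M.E, T.ncard = t → ∃ K, M.IsCocircuit K ∧ K.ncard = 2 * t ∧ T ⊆ K)
    (hcard : t ≤ M.E.ncard) (hAU : (⋃ i, A i) = M.E) (hAdisj : Pairwise (Disjoint on A))
    (hA : ∀ i, ∃ x y, x ≠ y ∧ M.closure {x} = M.closure {y} ∧ A i = {x, y}) :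
    M.IsSpike 1 t A := by
  choose x y hxy hcl hAxy using hA
  have hxA : ∀ i, x i ∈ A i := fun i ↦ hAxy i ▸ mem_insert _ _
  have hAE : ∀ i, A i ⊆ M.E := fun i ↦ hAU ▸ subset_iUnion A i
  have hA2 : ∀ i, (A i).ncard = 2 := fun i ↦ hAxy i ▸ ncard_pair (hxy i)
  have hunion : ∀ I : Finset (Fin m), (⋃ i ∈ I, A i).ncard = 2 * I.card := fun I ↦ by
    rw [← ncard_coe_finset I]
    exact I.finite_toSet.ncard_biUnion_eq_mul (fun i _ ↦ hE.subset (hAE i))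
      (hAdisj.set_pairwise _) (fun i _ ↦ hA2 i)
  have hm : M.E.ncard = 2 * m := by simpa [hAU] using hunion Finset.univ
  have h2t : 2 * t ≤ M.E.ncard := by
    obtain ⟨T, hTE, hTt⟩ := exists_subset_card_eq hcard
    obtain ⟨K, hK, hK2, -⟩ := hcocirc T hTE hTt
    exact hK2 ▸ ncard_le_ncard hK.subset_ground hE
  refine ⟨by omega, hAU, hAdisj, hA2, fun I hI ↦ ?_, fun I hI ↦ ?_⟩
  · obtain ⟨i, rfl⟩ := Finset.card_eq_one.1 hI
    rw [Finset.set_biUnion_singleton, hAxy i]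
    exact ((isNonloop_of_loopless (hAE i (hxA i))).closure_eq_closure_iff_isCircuit_of_ne
      (hxy i)).1 (hcl i)
  · have hinj : InjOn x I := fun i _ j _ hij ↦
      hAdisj.eq (not_disjoint_iff.2 ⟨x i, hxA i, hij ▸ hxA j⟩)
    obtain ⟨K, hK, hK2, hxK⟩ := hcocirc (x '' I)
      (image_subset_iff.2 fun i _ ↦ hAE i (hxA i)) (by rw [hinj.ncard_image, ncard_coe_finset, hI])
    have hsub : (⋃ i ∈ I, A i) ⊆ K := iUnion₂_subset fun i hi ↦ by
      have hxiK := hxK (mem_image_of_mem x hi)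
      rw [hAxy i]
      exact pair_subset hxiK
        (hK.parallelClass_subset hxiK ⟨hAE i (hAxy i ▸ mem_insert_of_mem _ rfl), (hcl i).symm⟩)
    rwa [eq_of_subset_of_ncard_le hsub (by rw [hK2, hunion, hI]) (hE.subset hK.subset_ground)]

end Matroid

universe u

open Matroid

/-- If `M` has the `(1,2,t,2t)`-property and `|E(M)| ≥ t`, then `M` is a
`(1,t)`-spike. -/
theorem statement11 {α : Type u} (t : ℕ) (ht : 0 < t)
    (M : Matroid α) (hE : M.E.Finite) (hM : M.HasProp 1 2 t (2 * t))
    (hcard : t ≤ M.E.ncard) :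
    ∃ (m : ℕ) (A : Fin m → Set α), M.IsSpike 1 t A := by
  obtain ⟨hcirc, hcocirc⟩ := hM
  have hpair : ∀ e ∈ M.E, ∃ f, e ≠ f ∧ M.IsCircuit {e, f} := fun e he ↦ by
    obtain ⟨C, hC, hC2, heC⟩ := hcirc {e} (singleton_subset_iff.2 he) (ncard_singleton e)
    obtain ⟨f, hef, rfl⟩ := exists_eq_pair_of_ncard_eq_two hC2 (singleton_subset_iff.1 heC)
    exact ⟨f, hef, hC⟩
  have : M.Loopless := loopless_iff_forall_isNonloop.2 fun e he ↦
    let ⟨_, hef, hC⟩ := hpair e he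
    hC.isNonloop_of_pair hef
  have hpar : ∀ e ∈ M.E, 2 ≤ (M.parallelClass e).ncard := fun e he ↦ by
    obtain ⟨f, hef, hC⟩ := hpair e he
    rw [← ncard_pair hef]
    exact ncard_le_ncard (pair_subset ⟨he, rfl⟩ (hC.mem_parallelClass hef))
      (hE.subset (M.parallelClass_subset_ground e))
  obtain ⟨m, A, hAU, hAdisj, hA⟩ := hE.exists_pairs_partition_of_even_fibers
    (even_ncard_parallelClass ht hE hcocirc hcard hpar)
  exact ⟨m, A, isSpike_of_partition_into_parallel_pairs ht hE hcocirc hcard hAU hAdisj hA⟩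
end

section
/- Let s and t be positive integers and let M be an (s,t)-spike with associated partition (A_1,…,A_m). Then m ≥ s + t − 1. -/
open Set Function

universe u

open Matroid

/-! A circuit has at most `r(M) + 1` elements and a cocircuit at most `r(M✶) + 1` elements,
while `r(M) + r(M✶) = |E|`. The union of `s` arms is a circuit with `2s` elements and the union
of `t` arms a cocircuit with `2t` elements, so `2s + 2t ≤ 2m + 2`. -/

namespace Matroid

variable {α : Type*} {M : Matroid α}

lemma IsCircuit.encard_add_encard_le_of_isCircuit_dual {C D : Set α} (hC : M.IsCircuit C)
    (hD : M✶.IsCircuit D) : C.encard + D.encard ≤ M.E.encard + 2 := by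
  rw [← hC.eRk_add_one_eq, ← hD.eRk_add_one_eq, ← M.eRank_add_eRank_dual]
  calc M.eRk C + 1 + (M✶.eRk D + 1) = M.eRk C + M✶.eRk D + 2 := by ring
    _ ≤ M.eRank + M✶.eRank + 2 := by gcongr <;> exact eRk_le_eRank _ _

end Matroid

lemma Set.encard_biUnion_of_pairwise_disjoint {ι α : Type*} {s : ι → Set α}
    (hs : Pairwise (Disjoint on s)) {k : ℕ∞} (hk : ∀ i, (s i).encard = k) (I : Finset ι) :
    (⋃ i ∈ I, s i).encard = I.card * k := by
  rw [← Finset.set_biUnion_coe, I.finite_toSet.encard_biUnion fun i _ j _ hij ↦ hs hij,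
    finsum_mem_coe_finset]
  simp [hk]

theorem statement12_general {α : Type u} (s t m : ℕ)
    (M : Matroid α) (A : Fin m → Set α) (hA : M.IsSpike s t A) :
    s + t - 1 ≤ m := by
  obtain ⟨hmax, hE, hdisj, hpair, hcirc, hcocirc⟩ := hA
  have hA2 (i : Fin m) : (A i).encard = 2 := by
    rw [← (Set.finite_of_ncard_pos (hpair i ▸ two_pos)).cast_ncard_eq, hpair i, Nat.cast_ofNat]
  have hunion := Set.encard_biUnion_of_pairwise_disjoint hdisj hA2
  have hEcard : M.E.encard = m * 2 := by simpa [← hE] using hunion Finset.univ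
  obtain ⟨I, -, hI⟩ := (Finset.univ : Finset (Fin m)).exists_subset_card_eq
    (by simpa using le_of_max_le_left hmax)
  obtain ⟨J, -, hJ⟩ := (Finset.univ : Finset (Fin m)).exists_subset_card_eq
    (by simpa using le_of_max_le_right hmax)
  have hsum := IsCircuit.encard_add_encard_le_of_isCircuit_dual (hcirc I hI) (hcocirc J hJ)
  rw [hunion, hunion, hEcard, hI, hJ] at hsum
  have : s * 2 + t * 2 ≤ m * 2 + 2 := by exact_mod_cast hsum
  omega

/-- An `(s,t)`-spike with associated partition `(A 1, …, A m)` satisfies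
`m ≥ s + t − 1`. -/
theorem statement12 {α : Type u} (s t m : ℕ) (hs : 0 < s) (ht : 0 < t)
    (M : Matroid α) (A : Fin m → Set α) (hA : M.IsSpike s t A) :
    s + t - 1 ≤ m :=
  statement12_general s t m M A hA
end

section
/- Let s and t be positive integers and let M be an (s,t)-spike of order m. Then r(M) = m + s − t and r*(M) = m − s + t, where r* denotes the rank of the dual matroid. -/
open Set Function

universe u

open Matroid

/-!
Since `r(M) + r*(M) = |E(M)| = 2m`, it suffices to show `r(M) ≤ m + s - t`, together with the
dual bound `r*(M) ≤ m - s + t`, which is the same statement for the `(t,s)`-spike `M✶`.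

Fix `t` arms `T`; their union is a cocircuit, so its complement together with any one of its
elements `e` spans `M`. Pick `s - 1` further arms `K` outside `T` (all of them, if there are
fewer). Every other arm `A i` outside `T` lies in the closure of the arms of `K` and any one
element of `A i`, because the arms of `K ∪ {i}` form a circuit. Hence `e`, the arms of `K` and
one element from each remaining arm form a spanning set of size at most `m + s - t`.
-/

lemma Set.eq_of_mem_of_ncard_eq_two {α : Type*} {X : Set α} (hX : X.ncard = 2) {x y z : α}
    (hx : x ∈ X) (hy : y ∈ X) (hz : z ∈ X) (hxy : x ≠ y) (hzy : z ≠ y) : z = x := by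
  obtain ⟨a, b, -, rfl⟩ := Set.ncard_eq_two.1 hX
  simp only [Set.mem_insert_iff, Set.mem_singleton_iff] at hx hy hz
  grind

namespace Matroid

variable {α : Type*} {M : Matroid α} {B K S : Set α} {e : α}

lemma IsCocircuit.spanning_insert_ground_sdiff (hK : M.IsCocircuit K) (he : e ∈ K) :
    M.Spanning (insert e (M.E \ K)) := by
  have hKE := hK.subset_ground
  rw [spanning_iff_compl_coindep (insert_subset (hKE he) sdiff_subset)]
  have hcompl : M.E \ insert e (M.E \ K) = K \ {e} := by
    ext z
    have := @hKE z
    simp only [mem_sdiff, mem_insert_iff, mem_singleton_iff]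
    tauto
  rw [hcompl]
  exact hK.isCircuit.sdiff_singleton_indep he

lemma IsCocircuit.spanning_of_subset_closure (hK : M.IsCocircuit K) (heK : e ∈ K) (heS : e ∈ S)
    (hKS : M.E \ K ⊆ M.closure S) (hSE : S ⊆ M.E) : M.Spanning S := by
  rw [spanning_iff_ground_subset_closure hSE, ← (hK.spanning_insert_ground_sdiff heK).closure_eq]
  exact closure_subset_closure_of_subset_closure
    (insert_subset (M.mem_closure_of_mem heS hSE) hKS)

lemma rk'_ground_eq_ncard [M.Finite] (hB : M.IsBase B) : M.rk' M.E = B.ncard := by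
  apply le_antisymm
  · refine csSup_le ⟨0, ∅, M.empty_indep, empty_subset _, by simp⟩ ?_
    rintro n ⟨I, hI, -, rfl⟩
    obtain ⟨B', hB', hIB'⟩ := hI.exists_isBase_superset
    exact (ncard_le_ncard hIB' hB'.finite).trans_eq (hB'.ncard_eq_ncard_of_isBase hB)
  · refine le_csSup ⟨M.E.ncard, ?_⟩ ⟨B, hB.indep, hB.subset_ground, rfl⟩
    rintro n ⟨I, -, hIE, rfl⟩
    exact ncard_le_ncard hIE M.ground_finite

lemma Spanning.rk'_ground_le_ncard [M.Finite] (hS : M.Spanning S) : M.rk' M.E ≤ S.ncard := by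
  obtain ⟨B, hB, hBS⟩ := hS.exists_isBase_subset
  rw [rk'_ground_eq_ncard hB]
  exact ncard_le_ncard hBS (M.ground_finite.subset hS.subset_ground)

lemma rk'_ground_add_rk'_dual [M.Finite] : M.rk' M.E + M✶.rk' M.E = M.E.ncard := by
  obtain ⟨B, hB⟩ := M.exists_isBase
  have hdual := rk'_ground_eq_ncard hB.compl_isBase_dual
  rw [dual_ground] at hdual
  rw [rk'_ground_eq_ncard hB, hdual]
  rw [add_comm]
  exact ncard_sdiff_add_ncard_of_subset hB.subset_ground M.ground_finite

namespace IsSpike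

variable {s t m : ℕ} {A : Fin m → Set α}

lemma dual (hA : M.IsSpike s t A) : M✶.IsSpike t s A := by
  obtain ⟨hm, hE, hdisj, hcard, hcirc, hcocirc⟩ := hA
  refine ⟨by rwa [max_comm], by rwa [dual_ground], hdisj, hcard, hcocirc, fun I hI => ?_⟩
  rw [IsCocircuit', dual_dual]
  exact hcirc I hI

lemma isCircuit (hA : M.IsSpike s t A) {I : Finset (Fin m)} (hI : I.card = s) :
    M.IsCircuit (⋃ i ∈ I, A i) :=
  hA.2.2.2.2.1 I hI

lemma isCocircuit (hA : M.IsSpike s t A) {I : Finset (Fin m)} (hI : I.card = t) :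
    M.IsCocircuit (⋃ i ∈ I, A i) :=
  hA.2.2.2.2.2 I hI

lemma arm_subset_ground (hA : M.IsSpike s t A) (i : Fin m) : A i ⊆ M.E :=
  hA.2.1 ▸ subset_iUnion A i

lemma arm_finite (hA : M.IsSpike s t A) (i : Fin m) : (A i).Finite :=
  finite_of_ncard_pos (by rw [hA.2.2.2.1 i]; norm_num)

lemma finite (hA : M.IsSpike s t A) : M.Finite :=
  ⟨hA.2.1 ▸ finite_iUnion hA.arm_finite⟩

lemma ncard_biUnion (hA : M.IsSpike s t A) (I : Finset (Fin m)) :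
    (⋃ i ∈ I, A i).ncard = 2 * I.card := by
  rw [← Finset.set_biUnion_coe, I.finite_toSet.ncard_biUnion
    (fun i _ => hA.arm_finite i) (fun i _ j _ hij => hA.2.2.1 hij)]
  simp [hA.2.2.2.1, finsum_mem_finset_eq_sum, mul_comm]

lemma ncard_ground (hA : M.IsSpike s t A) : M.E.ncard = 2 * m := by
  simpa [← hA.2.1] using hA.ncard_biUnion Finset.univ

lemma arm_subset_closure (hA : M.IsSpike s t A) {K : Finset (Fin m)} (hK : K.card + 1 = s)
    {i : Fin m} (hi : i ∉ K) {x : α} (hx : x ∈ A i) (hxS : x ∈ S) (hKS : ⋃ j ∈ K, A j ⊆ S)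
    (hSE : S ⊆ M.E) : A i ⊆ M.closure S := by
  classical
  have hC := hA.isCircuit (I := insert i K) (by rw [Finset.card_insert_of_notMem hi, hK])
  intro y hy
  obtain rfl | hyx := eq_or_ne y x
  · exact M.mem_closure_of_mem hxS hSE
  refine M.closure_subset_closure ?_
    (hC.mem_closure_sdiff_singleton_of_mem (mem_biUnion (Finset.mem_insert_self i K) hy))
  rintro z ⟨hzC, hzy⟩
  rw [Finset.set_biUnion_insert] at hzC
  rcases hzC with hzi | hzK
  · rwa [eq_of_mem_of_ncard_eq_two (hA.2.2.2.1 i) hx hy hzi hyx.symm hzy]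
  · exact hKS hzK

lemma rk'_ground_add_le (hA : M.IsSpike s t A) (hs : 0 < s) : M.rk' M.E + t ≤ m + s := by
  classical
  have := hA.finite
  have htm : t ≤ m := (le_max_right s t).trans hA.1
  obtain ⟨T, -, hT⟩ := Finset.exists_subset_card_eq (s := (Finset.univ : Finset (Fin m))) (n := t)
    (by simpa using htm)
  obtain ⟨e, he⟩ := (hA.isCocircuit hT).nonempty
  have hTc : Tᶜ.card = m - t := by simp [Finset.card_compl, hT]
  obtain ⟨K, hKT, hK⟩ :=
    Finset.exists_subset_card_eq (s := Tᶜ) (n := min (s - 1) (m - t)) (by omega)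
  choose x hx using fun i => nonempty_of_ncard_ne_zero (s := A i) (by simp [hA.2.2.2.1 i])
  set S := insert e ((⋃ i ∈ K, A i) ∪ x '' ↑(Tᶜ \ K))
  have hKS : ⋃ i ∈ K, A i ⊆ S := subset_union_left.trans (subset_insert _ _)
  have hSE : S ⊆ M.E := by
    refine insert_subset ((hA.isCocircuit hT).subset_ground he) (union_subset
      (iUnion₂_subset fun i _ => hA.arm_subset_ground i) ?_)
    rintro _ ⟨i, -, rfl⟩
    exact hA.arm_subset_ground i (hx i)
  have harm (i : Fin m) (hi : i ∉ T) : A i ⊆ M.closure S := by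
    by_cases hiK : i ∈ K
    · exact ((subset_biUnion_of_mem (u := A) hiK).trans hKS).trans (M.subset_closure S)
    -- `K` does not exhaust the arms outside `T`, so it has the full size `s - 1`.
    have hKs : K.card + 1 = s := by
      have := Finset.card_le_card (Finset.insert_subset (Finset.mem_compl.2 hi) hKT)
      rw [Finset.card_insert_of_notMem hiK] at this
      omega
    exact hA.arm_subset_closure hKs hiK (hx i)
      (mem_insert_of_mem _ (Or.inr ⟨i, by simp [hi, hiK], rfl⟩)) hKS hSE
  have hspan : M.Spanning S := by
    refine (hA.isCocircuit hT).spanning_of_subset_closure he (mem_insert e _) ?_ hSE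
    rintro z ⟨hzE, hzT⟩
    obtain ⟨i, hzi⟩ := mem_iUnion.1 (hA.2.1 ▸ hzE)
    exact harm i (fun hi => hzT (mem_biUnion hi hzi)) hzi
  have hcard : S.ncard ≤ 2 * K.card + (m - t - K.card) + 1 :=
    calc S.ncard ≤ ((⋃ i ∈ K, A i) ∪ x '' ↑(Tᶜ \ K)).ncard + 1 := ncard_insert_le _ _
      _ ≤ (⋃ i ∈ K, A i).ncard + (x '' ↑(Tᶜ \ K)).ncard + 1 := by
        gcongr; exact ncard_union_le _ _
      _ ≤ 2 * K.card + (m - t - K.card) + 1 := by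
        rw [hA.ncard_biUnion, ← hTc, ← Finset.card_sdiff_of_subset hKT]
        gcongr
        exact (ncard_image_le (Finset.finite_toSet _)).trans_eq (ncard_coe_finset _)
  have := hspan.rk'_ground_le_ncard
  omega

end IsSpike

end Matroid

/-- An `(s,t)`-spike of order `m` satisfies `r(M) = m + s − t` and
`r⋆(M) = m − s + t`. -/
theorem statement13 {α : Type u} (s t m : ℕ) (hs : 0 < s) (ht : 0 < t)
    (M : Matroid α) (A : Fin m → Set α) (hA : M.IsSpike s t A) :
    M.rk' M.E = m + s - t ∧ M✶.rk' M.E = m - s + t := by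
  have := hA.finite
  have hsm : s ≤ m := (le_max_left s t).trans hA.1
  have hrk := hA.rk'_ground_add_le hs
  have hcork := hA.dual.rk'_ground_add_le ht
  have hsum := M.rk'_ground_add_rk'_dual
  rw [dual_ground] at hcork
  rw [hA.ncard_ground] at hsum
  omega
end

section
/- Let s and t be positive integers, let M be an (s,t)-spike of order m with associated partition (A_1,…,A_m), and let C be a circuit of M. Then either (1) C = ⋃_{j∈J} A_j for some s-element set J ⊆ [m], or (2) |{i ∈ [m] : A_i ∩ C ≠ ∅}| ≥ m − (t−2) and |{i ∈ [m] : A_i ⊆ C}| < s. -/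
open Set Function

section Aux

namespace Matroid

variable {β : Type*} {M : Matroid β} {C D : Set β} {e : β}

lemma IsCircuit'.dep (hC : M.IsCircuit' C) : M.Dep C := hC.prop

lemma IsCircuit'.eq_of_circuit_subset (hC : M.IsCircuit' C) (hD : M.IsCircuit' D)
    (h : D ⊆ C) : C = D :=
  (hC.2 hD.prop h).antisymm h

lemma IsCircuit'.diff_singleton_indep (hC : M.IsCircuit' C) (he : e ∈ C) :
    M.Indep (C \ {e}) := by
  by_contra h
  have hdep : M.Dep (C \ {e}) :=
    M.dep_of_not_indep h (diff_subset.trans hC.prop.subset_ground)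
  exact (hC.2 hdep diff_subset he).2 rfl

lemma IsCircuit'.inter_cocircuit_ne_singleton (hC : M.IsCircuit' C)
    (hD : M.IsCocircuit' D) (h : C ∩ D = {e}) : False := by
  have hem : e ∈ C ∩ D := by rw [h]; exact rfl
  have heC : e ∈ C := hem.1
  have heD : e ∈ D := hem.2
  have hDE : D ⊆ M.E := hD.prop.subset_ground
  have hCe : M.Indep (C \ {e}) := hC.diff_singleton_indep heC
  have hecl : e ∈ M.closure (C \ {e}) := by
    rw [hCe.mem_closure_iff_of_notMem (by simp), insert_diff_singleton,
      insert_eq_of_mem heC]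
    exact hC.prop
  have hsub : C \ {e} ⊆ M.E \ D := by
    rintro x ⟨hxC, hxe⟩
    refine ⟨hC.prop.subset_ground hxC, fun hxD => hxe ?_⟩
    have : x ∈ C ∩ D := ⟨hxC, hxD⟩
    rwa [h] at this
  have hco : M.Coindep (D \ {e}) := hD.diff_singleton_indep heD
  have hclcompl : M.closure (M.E \ (D \ {e})) = M.E := hco.closure_compl
  have h1 : M.E \ (D \ {e}) ⊆ M.closure (M.E \ D) := by
    intro x hx
    by_cases hxD : x ∈ D
    · have hxe : x = e := by
        by_contra hne
        exact hx.2 ⟨hxD, hne⟩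
      subst hxe
      exact M.closure_subset_closure hsub hecl
    · exact M.subset_closure (M.E \ D) diff_subset ⟨hx.1, hxD⟩
  have hcleq : M.closure (M.E \ D) = M.E := by
    refine (M.closure_subset_ground _).antisymm ?_
    calc M.E = M.closure (M.E \ (D \ {e})) := hclcompl.symm
      _ ⊆ M.closure (M.E \ D) := M.closure_subset_closure_of_subset_closure h1
  have hsp : M.Spanning (M.E \ D) := by rwa [spanning_iff_closure_eq]
  have hcoD : M.Coindep D := by rwa [coindep_iff_compl_spanning hDE]
  exact hD.prop.not_indep hcoD

end Matroid

end Aux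

universe u

open Matroid

/-- If `C` is a circuit of an `(s,t)`-spike of order `m` with associated
partition `(A 1, …, A m)`, then either `C` is the union of `s` arms, or `C` meets at least
`m − (t − 2)` arms and contains fewer than `s` arms. -/
theorem statement14 {α : Type u} (s t m : ℕ) (hs : 0 < s) (ht : 0 < t)
    (M : Matroid α) (A : Fin m → Set α) (hA : M.IsSpike s t A)
    (C : Set α) (hC : M.IsCircuit' C) :
    (∃ J : Finset (Fin m), J.card = s ∧ C = ⋃ j ∈ J, A j) ∨
      ((m : ℤ) - ((t : ℤ) - 2) ≤ ({i : Fin m | (A i ∩ C).Nonempty}.ncard : ℤ) ∧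
        {i : Fin m | A i ⊆ C}.ncard < s) := by

  classical
  obtain ⟨hm, hE, hdisj, hcard2, hcirc, hcocirc⟩ := hA
  have hsm : s ≤ m := le_trans (le_max_left s t) hm
  have hCE : C ⊆ M.E := hC.prop.subset_ground
  set Pf : Finset (Fin m) := Finset.univ.filter (fun i => A i ⊆ C) with hPf
  set Qf : Finset (Fin m) := Finset.univ.filter (fun i => (A i ∩ C).Nonempty) with hQf
  have hPcard : {i : Fin m | A i ⊆ C}.ncard = Pf.card := by
    rw [Set.ncard_eq_toFinset_card']
    congr 1
    ext i
    simp [hPf]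
  have hQcard : {i : Fin m | (A i ∩ C).Nonempty}.ncard = Qf.card := by
    rw [Set.ncard_eq_toFinset_card']
    congr 1
    ext i
    simp [hQf]
  by_cases hPs : s ≤ Pf.card
  · -- C is the union of s arms
    left
    obtain ⟨J, hJP, hJs⟩ := Finset.exists_subset_card_eq hPs
    refine ⟨J, hJs, ?_⟩
    have hU : M.IsCircuit' (⋃ j ∈ J, A j) := hcirc J hJs
    have hUC : (⋃ j ∈ J, A j) ⊆ C := by
      refine Set.iUnion₂_subset fun j hj => ?_
      have := hJP hj
      simp only [hPf, Finset.mem_filter] at this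
      exact this.2
    exact hC.eq_of_circuit_subset hU hUC
  · push_neg at hPs
    right
    refine ⟨?_, by omega⟩
    -- first: find an arm meeting C in exactly one point
    have hexists : ∃ i, (A i ∩ C).Nonempty ∧ ¬ (A i ⊆ C) := by
      by_contra hcon
      push_neg at hcon
      have hCeq : C = ⋃ i ∈ Pf, A i := by
        apply Set.Subset.antisymm
        · intro x hx
          have hxE : x ∈ M.E := hCE hx
          rw [← hE] at hxE
          obtain ⟨i, hxi⟩ := Set.mem_iUnion.mp hxE
          have hi : A i ⊆ C := hcon i ⟨x, hxi, hx⟩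
          exact Set.mem_iUnion₂.mpr ⟨i, Finset.mem_filter.mpr ⟨Finset.mem_univ i, hi⟩, hxi⟩
        · refine Set.iUnion₂_subset fun j hj => ?_
          simp only [hPf, Finset.mem_filter] at hj
          exact hj.2
      obtain ⟨J, hPJ, hJs⟩ := Finset.exists_superset_card_eq (le_of_lt hPs)
        (by rwa [Fintype.card_fin])
      have hU : M.IsCircuit' (⋃ j ∈ J, A j) := hcirc J hJs
      have hCU : C ⊆ ⋃ j ∈ J, A j := by
        rw [hCeq]
        refine Set.iUnion₂_subset fun j hj => ?_
        intro y hy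
        exact Set.mem_iUnion₂.mpr ⟨j, hPJ hj, hy⟩
      have : (⋃ j ∈ J, A j) = C := hU.eq_of_circuit_subset hC hCU
      obtain ⟨j, hjJ, hjP⟩ : ∃ j ∈ J, j ∉ Pf := by
        by_contra hcc
        push_neg at hcc
        have := Finset.card_le_card (fun x hx => hcc x hx)
        omega
      refine hjP ?_
      simp only [hPf, Finset.mem_filter]
      refine ⟨Finset.mem_univ j, ?_⟩
      rw [← this]
      intro y hy
      exact Set.mem_iUnion₂.mpr ⟨j, hjJ, hy⟩
    obtain ⟨i, hiQ, hiP⟩ := hexists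
    -- A i ∩ C is a singleton
    obtain ⟨a, b, hab, hAi⟩ := Set.ncard_eq_two.mp (hcard2 i)
    have hsing : ∃ x, A i ∩ C = {x} := by
      rw [hAi] at hiQ hiP ⊢
      by_cases haC : a ∈ C
      · have hbC : b ∉ C := by
          intro hbC
          refine hiP ?_
          intro y hy
          simp only [Set.mem_insert_iff, Set.mem_singleton_iff] at hy
          rcases hy with rfl | rfl
          exacts [haC, hbC]
        refine ⟨a, ?_⟩
        ext y
        simp only [Set.mem_inter_iff, Set.mem_insert_iff, Set.mem_singleton_iff]
        constructor
        · rintro ⟨rfl | rfl, hyC⟩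
          · rfl
          · exact absurd hyC hbC
        · rintro rfl
          exact ⟨Or.inl rfl, haC⟩
      · obtain ⟨y, hy1, hy2⟩ := hiQ
        simp only [Set.mem_insert_iff, Set.mem_singleton_iff] at hy1
        have hbC : b ∈ C := by
          rcases hy1 with rfl | rfl
          exacts [absurd hy2 haC, hy2]
        refine ⟨b, ?_⟩
        ext y
        simp only [Set.mem_inter_iff, Set.mem_insert_iff, Set.mem_singleton_iff]
        constructor
        · rintro ⟨rfl | rfl, hyC⟩
          · exact absurd hyC haC
          · rfl
        · rintro rfl
          exact ⟨Or.inr rfl, hbC⟩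
    obtain ⟨x, hx⟩ := hsing
    -- now the counting
    by_contra hbad
    push_neg at hbad
    have hQm : Qf.card ≤ m := le_trans (Finset.card_le_card (Finset.subset_univ _))
      (by simp)
    set Qcf : Finset (Fin m) := Finset.univ.filter (fun i => ¬ (A i ∩ C).Nonempty) with hQcf
    have hsum : Qf.card + Qcf.card = m := by
      rw [hQf, hQcf, Finset.card_filter_add_card_filter_not]
      simp
    have htQc : t - 1 ≤ Qcf.card := by
      rw [hQcard] at hbad
      omega
    obtain ⟨T, hTQ, hT⟩ := Finset.exists_subset_card_eq htQc
    have hiT : i ∉ T := by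
      intro hiT
      have := hTQ hiT
      simp only [hQcf, Finset.mem_filter] at this
      exact this.2 hiQ
    have hcard : (insert i T).card = t := by
      rw [Finset.card_insert_of_notMem hiT, hT]
      omega
    have hD : M.IsCocircuit' (⋃ j ∈ insert i T, A j) := hcocirc _ hcard
    refine hC.inter_cocircuit_ne_singleton hD (e := x) ?_
    have : C ∩ ⋃ j ∈ insert i T, A j = ⋃ j ∈ insert i T, (C ∩ A j) := by
      rw [Set.inter_iUnion₂]
    rw [this]
    apply Set.Subset.antisymm
    · refine Set.iUnion₂_subset fun j hj => ?_
      rcases Finset.mem_insert.mp hj with rfl | hjT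
      · rw [Set.inter_comm, hx]
      · have := hTQ hjT
        simp only [hQcf, Finset.mem_filter, Set.not_nonempty_iff_eq_empty] at this
        rw [Set.inter_comm, this.2]
        exact Set.empty_subset _
    · intro y hy
      rw [Set.mem_singleton_iff] at hy
      rw [hy]
      have hxm : x ∈ A i ∩ C := by rw [hx]; exact rfl
      exact Set.mem_iUnion₂.mpr ⟨i, Finset.mem_insert_self i T, hxm.2, hxm.1⟩
end
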